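/- arXiv:2105.00216 — 12 statements merged into one kernel-verified Lean document; each statement's English description precedes it below -/
import Mathlib

section
/- May's theorem: when there are exactly two alternatives and an odd number of voters, the simple-majority (plurality) rule is the unique SCF that is resolute, anonymous, neutral and monotonic. -/
/-- A profile assigns a strict linear order (ballot) on `A` to each voter. -/
def IsProfile {ι A : Type*} (P : ι → A → A → Prop) : Prop :=
  ∀ i, IsStrictTotalOrder A (P i)

/-- The plurality score of `z`: the number of voters ranking `z` first. -/
noncomputable def score {ι A : Type*} (P : ι → A → A → Prop) (z : A) : ℕ :=
  Nat.card {i : ι // ∀ w, w ≠ z → P i z w}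

/-- The plurality rule: alternatives with maximal plurality score
(over two alternatives: the majority alternative, both on a tie). -/
noncomputable def Plurality {ι A : Type*} (P : ι → A → A → Prop) : Set A :=
  {z | ∀ w, score P w ≤ score P z}

/-- `P'` is obtained from `P` by some voters raising `x`. -/
def RaisesX {ι A : Type*} (P P' : ι → A → A → Prop) (x : A) : Prop :=
  (∀ i y, y ≠ x → P i x y → P' i x y) ∧
  (∀ i y z, y ≠ x → z ≠ x → (P i y z ↔ P' i y z))

/-- Monotonicity. -/
def Monotonic {ι A : Type*} (f : (ι → A → A → Prop) → Set A) : Prop :=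
  ∀ P P' x, IsProfile P → IsProfile P' → RaisesX P P' x → x ∈ f P → x ∈ f P'

/-- Anonymity: invariance under permutations of the voters. -/
def Anonymous {ι A : Type*} (f : (ι → A → A → Prop) → Set A) : Prop :=
  ∀ (π : Equiv.Perm ι) (P : ι → A → A → Prop), IsProfile P →
    f (fun i => P (π i)) = f P

/-- Neutrality: `f` commutes with permutations of the alternatives. -/
def Neutral {ι A : Type*} (f : (ι → A → A → Prop) → Set A) : Prop :=
  ∀ (ρ : Equiv.Perm A) (P : ι → A → A → Prop), IsProfile P →
    f (fun i x y => P i (ρ.symm x) (ρ.symm y)) = ρ '' f P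

/-- Resoluteness: the social choice is always a singleton. -/
def Resolute {ι A : Type*} (f : (ι → A → A → Prop) → Set A) : Prop :=
  ∀ P, IsProfile P → ∃ z, f P = {z}

section MayHelpers

open Classical

variable {ι A : Type*} [Fintype ι]

private lemma asymm' {R : A → A → Prop} (h : IsStrictTotalOrder A R) {a b : A}
    (hab : R a b) : ¬ R b a := fun hba => h.irrefl a (h.trans _ _ _ hab hba)

private lemma total' {R : A → A → Prop} (h : IsStrictTotalOrder A R) {a b : A}
    (hab : a ≠ b) : R a b ∨ R b a := by
  haveI := h; rcases trichotomous_of R a b with h1 | h1 | h1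
  · exact Or.inl h1
  · exact absurd h1 hab
  · exact Or.inr h1

private lemma rel_ext {x y : A} (hxy : x ≠ y) (hcov : ∀ a : A, a = x ∨ a = y)
    {R S : A → A → Prop} (hR : IsStrictTotalOrder A R) (hS : IsStrictTotalOrder A S)
    (h : R x y ↔ S x y) : R = S := by
  have hR' : R y x ↔ ¬ R x y :=
    ⟨fun h1 h2 => asymm' hR h2 h1, fun h2 => (total' hR hxy).resolve_left h2⟩
  have hS' : S y x ↔ ¬ S x y :=
    ⟨fun h1 h2 => asymm' hS h2 h1, fun h2 => (total' hS hxy).resolve_left h2⟩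
  funext a b
  apply propext
  rcases hcov a with rfl | rfl <;> rcases hcov b with rfl | rfl
  · exact iff_of_false (hR.irrefl _) (hS.irrefl _)
  · exact h
  · rw [hR', hS', h]
  · exact iff_of_false (hR.irrefl _) (hS.irrefl _)

/-- The set of voters ranking `z` first. -/
noncomputable def topSet (P : ι → A → A → Prop) (z : A) : Finset ι :=
  Finset.univ.filter fun i => ∀ w, w ≠ z → P i z w

lemma score_eq_card (P : ι → A → A → Prop) (z : A) :
    score P z = (topSet P z).card := by
  rw [score, Nat.card_eq_fintype_card, topSet, Fintype.card_subtype]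

lemma mem_topSet_iff {x y : A} (hxy : x ≠ y) (hcov : ∀ a : A, a = x ∨ a = y)
    (P : ι → A → A → Prop) (i : ι) : i ∈ topSet P x ↔ P i x y := by
  simp only [topSet, Finset.mem_filter, Finset.mem_univ, true_and]
  constructor
  · intro h; exact h y (Ne.symm hxy)
  · intro h w hw
    rcases hcov w with rfl | rfl
    · exact absurd rfl hw
    · exact h

lemma topSet_compl {x y : A} (hxy : x ≠ y) (hcov : ∀ a : A, a = x ∨ a = y)
    {P : ι → A → A → Prop} (hP : IsProfile P) : topSet P y = (topSet P x)ᶜ := by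
  ext i
  rw [mem_topSet_iff hxy.symm (fun a => (hcov a).symm) P i, Finset.mem_compl,
    mem_topSet_iff hxy hcov P i]
  exact ⟨fun h h2 => asymm' (hP i) h2 h, fun h => (total' (hP i) hxy).resolve_left h⟩

lemma score_add {x y : A} (hxy : x ≠ y) (hcov : ∀ a : A, a = x ∨ a = y)
    {P : ι → A → A → Prop} (hP : IsProfile P) :
    score P x + score P y = Fintype.card ι := by
  rw [score_eq_card, score_eq_card, topSet_compl hxy hcov hP,
    Finset.card_add_card_compl]

lemma plurality_eq {x y : A} (hcov : ∀ a : A, a = x ∨ a = y)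
    {P : ι → A → A → Prop} (h : score P y < score P x) : Plurality P = {x} := by
  ext z
  simp only [Plurality, Set.mem_setOf_eq, Set.mem_singleton_iff]
  constructor
  · intro hz
    rcases hcov z with rfl | rfl
    · rfl
    · exact absurd (hz x) (not_le.mpr h)
  · rintro rfl w
    rcases hcov w with rfl | rfl
    · exact le_refl _
    · exact h.le

lemma isProfile_comp (ρ : Equiv.Perm A) {P : ι → A → A → Prop} (hP : IsProfile P) :
    IsProfile (fun i a b => P i (ρ.symm a) (ρ.symm b)) := by
  intro i
  refine { trichotomous := ?_, irrefl := ?_, trans := ?_ }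
  · intro a b
    intro h1 h2
    exact ρ.symm.injective ((hP i).trichotomous _ _ h1 h2)
  · exact fun a => (hP i).irrefl _
  · exact fun a b c => (hP i).trans _ _ _

private lemma sto_pair {u v : A} (huv : u ≠ v) (hcov : ∀ a : A, a = u ∨ a = v) :
    IsStrictTotalOrder A (fun a b => a = u ∧ b = v) := by
  refine { trichotomous := ?_, irrefl := ?_, trans := ?_ }
  · intro a b
    rcases hcov a with rfl | rfl <;> rcases hcov b with rfl | rfl
    · exact fun _ _ => rfl
    · exact fun h _ => absurd ⟨rfl, rfl⟩ h
    · exact fun _ h => absurd ⟨rfl, rfl⟩ h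
    · exact fun _ _ => rfl
  · rintro a ⟨rfl, h2⟩
    exact huv h2
  · rintro a b c ⟨rfl, rfl⟩ ⟨h3, rfl⟩
    exact absurd h3 huv.symm

/-- The profile where voters in `t` rank `x` over `y`, the others `y` over `x`. -/
def dictP (x y : A) (t : Finset ι) : ι → A → A → Prop :=
  fun i a b => (i ∈ t ∧ a = x ∧ b = y) ∨ (i ∉ t ∧ a = y ∧ b = x)

lemma dictP_isProfile {x y : A} (hxy : x ≠ y) (hcov : ∀ a : A, a = x ∨ a = y)
    (t : Finset ι) : IsProfile (dictP x y t) := by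
  intro i
  by_cases hi : i ∈ t
  · have : dictP x y t i = fun a b => a = x ∧ b = y := by
      funext a b; simp [dictP, hi]
    rw [this]; exact sto_pair hxy hcov
  · have : dictP x y t i = fun a b => a = y ∧ b = x := by
      funext a b; simp [dictP, hi]
    rw [this]; exact sto_pair hxy.symm (fun a => (hcov a).symm)

lemma dictP_xy {x y : A} (hxy : x ≠ y) (t : Finset ι) (i : ι) :
    dictP x y t i x y ↔ i ∈ t := by
  simp [dictP, hxy, hxy.symm]

lemma exists_perm (s t : Finset ι) (h : s.card = t.card) :
    ∃ π : Equiv.Perm ι, ∀ i, (π i ∈ s ↔ i ∈ t) := by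
  classical
  have hc1 : Fintype.card {i // i ∈ t} = Fintype.card {i // i ∈ s} := by
    simp only [Fintype.card_coe, h]
  have hc2 : Fintype.card {i // ¬ i ∈ t} = Fintype.card {i // ¬ i ∈ s} := by
    rw [Fintype.card_subtype_compl, Fintype.card_subtype_compl, hc1]
  let e1 : {i // i ∈ t} ≃ {i // i ∈ s} := Fintype.equivOfCardEq hc1
  let e2 : {i // ¬ i ∈ t} ≃ {i // ¬ i ∈ s} := Fintype.equivOfCardEq hc2
  refine ⟨(Equiv.sumCompl (· ∈ t)).symm.trans ((e1.sumCongr e2).trans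
    (Equiv.sumCompl (· ∈ s))), fun i => ?_⟩
  by_cases hi : i ∈ t
  · simp only [Equiv.trans_apply, Equiv.sumCompl_symm_apply_of_pos hi,
      Equiv.sumCongr_apply, Sum.map_inl, Equiv.sumCompl_apply_inl]
    exact iff_of_true (e1 ⟨i, hi⟩).2 hi
  · simp only [Equiv.trans_apply, Equiv.sumCompl_symm_apply_of_neg hi,
      Equiv.sumCongr_apply, Sum.map_inr, Equiv.sumCompl_apply_inr]
    exact iff_of_false (e2 ⟨i, hi⟩).2 hi

lemma score_perm (π : Equiv.Perm ι) (P : ι → A → A → Prop) (z : A) :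
    score (fun i => P (π i)) z = score P z :=
  Nat.card_congr (π.subtypeEquiv fun i => Iff.rfl)

lemma score_comp (ρ : Equiv.Perm A) (P : ι → A → A → Prop) (z : A) :
    score (fun i a b => P i (ρ.symm a) (ρ.symm b)) z = score P (ρ.symm z) := by
  refine Nat.card_congr (Equiv.subtypeEquivRight fun i => ?_)
  constructor
  · intro h w' hw'
    have := h (ρ w') (fun hh => hw' (by rw [← hh, Equiv.symm_apply_apply]))
    simpa using this
  · intro h w hw
    exact h (ρ.symm w) (fun hh => hw (ρ.symm.injective hh))

lemma plurality_comp (ρ : Equiv.Perm A) (P : ι → A → A → Prop) :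
    Plurality (fun i a b => P i (ρ.symm a) (ρ.symm b)) = ρ '' Plurality P := by
  rw [Equiv.image_eq_preimage_symm]
  ext z
  simp only [Plurality, Set.mem_setOf_eq, Set.mem_preimage, score_comp]
  constructor
  · intro h w
    simpa using h (ρ w)
  · intro h w
    exact h (ρ.symm w)

lemma plurality_mono {x y : A} (hxy : x ≠ y) (hcov : ∀ a : A, a = x ∨ a = y)
    {P P' : ι → A → A → Prop} (hP : IsProfile P) (hP' : IsProfile P')
    (hr : RaisesX P P' x) (hx : x ∈ Plurality P) : x ∈ Plurality P' := by
  have h1 : score P x ≤ score P' x := by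
    rw [score_eq_card, score_eq_card]
    apply Finset.card_le_card
    intro i hi
    rw [mem_topSet_iff hxy hcov] at hi ⊢
    exact hr.1 i y hxy.symm hi
  have h2 : score P' y ≤ score P y := by
    rw [score_eq_card, score_eq_card]
    apply Finset.card_le_card
    intro i hi
    rw [mem_topSet_iff hxy.symm (fun a => (hcov a).symm)] at hi ⊢
    by_contra hc
    have : P i x y := (total' (hP i) hxy).resolve_right hc
    exact asymm' (hP' i) (hr.1 i y hxy.symm this) hi
  intro w
  rcases hcov w with rfl | rfl
  · exact le_refl _
  · exact le_trans h2 (le_trans (hx _) h1)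

lemma main_lemma {x y : A} (hxy : x ≠ y) (hcov : ∀ a : A, a = x ∨ a = y)
    {f : (ι → A → A → Prop) → Set A} (hres : Resolute f) (hanon : Anonymous f)
    (hneu : Neutral f) (hmono : Monotonic f) {P : ι → A → A → Prop}
    (hP : IsProfile P) (hlt : score P y < score P x) : f P = {x} := by
  obtain ⟨z, hz⟩ := hres P hP
  rcases hcov z with rfl | hzy
  · exact hz
  rw [hzy] at hz
  exfalso
  set ρ := Equiv.swap x y with hρ
  set Pσ : ι → A → A → Prop := fun i a b => P i (ρ.symm a) (ρ.symm b) with hPσ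
  have hPσp : IsProfile Pσ := isProfile_comp ρ hP
  have hfσ : f Pσ = {x} := by
    rw [hPσ, hneu ρ P hP, hz, Set.image_singleton, hρ, Equiv.swap_apply_right]
  have hscoreσx : score Pσ x = score P y := by
    rw [hPσ, score_comp, hρ, Equiv.symm_swap, Equiv.swap_apply_left]
  -- a superset t of the supporters of x in Pσ, with exactly `score P x` voters
  have h1 : (topSet Pσ x).card = score P y := by rw [← score_eq_card, hscoreσx]
  have hle1 : (topSet Pσ x).card ≤ score P x := by rw [h1]; exact hlt.le
  have hle2 : score P x ≤ Fintype.card ι := by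
    rw [score_eq_card, ← Finset.card_univ]; exact Finset.card_le_univ _
  obtain ⟨t, hsub, htcard⟩ := Finset.exists_superset_card_eq hle1 hle2
  have hdp : IsProfile (dictP x y t) := dictP_isProfile hxy hcov t
  have hraise : RaisesX Pσ (dictP x y t) x := by
    constructor
    · intro i w hw hPixw
      rcases hcov w with rfl | rfl
      · exact absurd rfl hw
      · have hit : i ∈ t := hsub ((mem_topSet_iff hxy hcov Pσ i).mpr hPixw)
        exact Or.inl ⟨hit, rfl, rfl⟩
    · intro i a b ha hb
      rcases hcov a with rfl | rfl
      · exact absurd rfl ha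
      rcases hcov b with rfl | rfl
      · exact absurd rfl hb
      refine iff_of_false ((hPσp i).irrefl _) ?_
      rintro (⟨_, h1, _⟩ | ⟨_, _, h2⟩)
      · exact hxy h1.symm
      · exact hxy h2.symm
  have hxmem : x ∈ f (dictP x y t) := by
    refine hmono Pσ (dictP x y t) x hPσp hdp hraise ?_
    rw [hfσ]; rfl
  -- the dictP profile is a permuted copy of P
  have hcards : (topSet P x).card = t.card := by
    rw [← score_eq_card, htcard]
  obtain ⟨π, hπ⟩ := exists_perm (topSet P x) t hcards
  have hPP : (fun i => P (π i)) = dictP x y t := by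
    funext i
    refine rel_ext hxy hcov (hP (π i)) (hdp i) ?_
    rw [dictP_xy hxy, ← hπ i, mem_topSet_iff hxy hcov]
  have hfd : f (dictP x y t) = {y} := by
    rw [← hPP, hanon π P hP, hz]
  rw [hfd] at hxmem
  exact hxy hxmem

end MayHelpers

/-- May's theorem: over two alternatives with an odd number of voters, plurality
is the unique resolute, anonymous, neutral and monotonic SCF. -/
theorem mays_theorem {ι A : Type*} [Fintype ι] [Fintype A]
    (hA : Fintype.card A = 2) (hn : Odd (Fintype.card ι))
    (f : (ι → A → A → Prop) → Set A) :
    (Resolute f ∧ Anonymous f ∧ Neutral f ∧ Monotonic f) ↔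
      ∀ P, IsProfile P → f P = Plurality P := by
  obtain ⟨x, y, hxy, hcovset⟩ :=
    (Nat.card_eq_two_iff (α := A)).mp (by rw [Nat.card_eq_fintype_card, hA])
  have hcov : ∀ a : A, a = x ∨ a = y := fun a => by
    have h2 : a ∈ ({x, y} : Set A) := by rw [hcovset]; exact Set.mem_univ a
    simpa using h2
  have hcov' : ∀ a : A, a = y ∨ a = x := fun a => (hcov a).symm
  have hne : ∀ P : ι → A → A → Prop, IsProfile P → score P x ≠ score P y := by
    intro P hP h
    have hsum := score_add hxy hcov hP
    rcases hn with ⟨m, hm⟩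
    omega
  constructor
  · rintro ⟨hres, hanon, hneu, hmono⟩ P hP
    rcases (hne P hP).lt_or_gt with h | h
    · rw [main_lemma hxy.symm hcov' hres hanon hneu hmono hP h, plurality_eq hcov' h]
    · rw [main_lemma hxy hcov hres hanon hneu hmono hP h, plurality_eq hcov h]
  · intro h
    refine ⟨?_, ?_, ?_, ?_⟩
    · intro P hP
      rw [h P hP]
      rcases (hne P hP).lt_or_gt with hlt | hlt
      · exact ⟨y, plurality_eq hcov' hlt⟩
      · exact ⟨x, plurality_eq hcov hlt⟩
    · intro π P hP
      rw [h _ (fun i => hP (π i)), h P hP]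
      ext z
      simp only [Plurality, Set.mem_setOf_eq, score_perm]
    · intro ρ P hP
      rw [h _ (isProfile_comp ρ hP), h P hP, plurality_comp]
    · intro P P' w hP hP' hr hw
      rw [h P hP] at hw
      rw [h P' hP']
      rcases hcov w with rfl | rfl
      · exact plurality_mono hxy hcov hP hP' hr hw
      · exact plurality_mono hxy.symm hcov' hP hP' hr hw
end

section
/- May's theorem for quota rules: with exactly two alternatives, if an SCF f is anonymous, neutral and monotonic, then there exists an integer q with n/2 < q ≤ n+1 such that f equals the quota rule Q_q. -/
/-- The quota rule: the alternatives whose plurality score meets the quota `q`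
if there are any, and all alternatives otherwise. -/
noncomputable def Quota {ι A : Type*} (q : ℕ) (P : ι → A → A → Prop) : Set A :=
  {z | q ≤ score P z ∨ ∀ w, score P w < q}

set_option linter.unusedSectionVars false

section Aux

open Classical

variable {ι A : Type*} [Fintype ι] [Fintype A]

/-- The canonical two-alternative profile where voters in `S` rank `a` first. -/
noncomputable def Prof2 (a b : A) (S : Finset ι) : ι → A → A → Prop :=
  fun i x y => if i ∈ S then x = a ∧ y = b else x = b ∧ y = a

theorem bal_sto (u v : A) (huv : u ≠ v) (hall : ∀ z : A, z = u ∨ z = v) :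
    IsStrictTotalOrder A (fun x y => x = u ∧ y = v) := by
  refine { trichotomous := ?_, irrefl := ?_, trans := ?_ }
  · intro x y
    rcases hall x with rfl | rfl <;> rcases hall y with rfl | rfl <;> tauto
  · rintro x ⟨rfl, h⟩; exact huv h
  · rintro x y z ⟨rfl, rfl⟩ ⟨h, _⟩; exact absurd h (Ne.symm huv)

theorem isProfile_prof2 (a b : A) (hab : a ≠ b) (hall : ∀ z : A, z = a ∨ z = b)
    (S : Finset ι) : IsProfile (Prof2 a b S) := by
  intro i
  unfold Prof2
  by_cases hi : i ∈ S
  · simpa [hi] using bal_sto a b hab hall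
  · simpa [hi] using bal_sto b a (Ne.symm hab) (fun z => (hall z).symm)

theorem eq_prof2 (a b : A) (hab : a ≠ b) (hall : ∀ z : A, z = a ∨ z = b)
    (P : ι → A → A → Prop) (hP : IsProfile P) :
    P = Prof2 a b (Finset.univ.filter fun i => P i a b) := by
  funext i x y
  haveI := hP i
  have hir : ∀ z : A, ¬ P i z z := fun z => irrefl_of (P i) z
  have hasym : ¬ (P i a b ∧ P i b a) := fun ⟨h1, h2⟩ => hir a (trans_of (P i) h1 h2)
  unfold Prof2
  by_cases hiab : P i a b
  · have hnba : ¬ P i b a := fun h => hasym ⟨hiab, h⟩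
    rw [if_pos (by simp [hiab])]
    apply propext
    rcases hall x with rfl | rfl <;> rcases hall y with rfl | rfl <;>
      simp [hab, Ne.symm hab, hiab, hir, hnba]
  · have hba : P i b a := by
      rcases trichotomous_of (P i) a b with h | h | h
      · exact absurd h hiab
      · exact absurd h hab
      · exact h
    rw [if_neg (by simp [hiab])]
    apply propext
    rcases hall x with rfl | rfl <;> rcases hall y with rfl | rfl <;>
      simp [hab, Ne.symm hab, hba, hir, hiab]

theorem score_prof2_a (a b : A) (hab : a ≠ b) (hall : ∀ z : A, z = a ∨ z = b)
    (S : Finset ι) : score (Prof2 a b S) a = S.card := by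
  unfold score
  have key : ∀ i : ι, (∀ w, w ≠ a → Prof2 a b S i a w) ↔ i ∈ S := by
    intro i
    unfold Prof2
    constructor
    · intro h
      have hb := h b (Ne.symm hab)
      by_contra hi
      rw [if_neg hi] at hb
      exact hab hb.1
    · intro hi w hw
      rw [if_pos hi]
      rcases hall w with rfl | rfl
      · exact absurd rfl hw
      · exact ⟨rfl, rfl⟩
  rw [Nat.card_congr (Equiv.subtypeEquivRight key)]
  exact Nat.card_eq_finsetCard S

theorem score_prof2_b (a b : A) (hab : a ≠ b) (hall : ∀ z : A, z = a ∨ z = b)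
    (S : Finset ι) : score (Prof2 a b S) b = (Sᶜ : Finset ι).card := by
  unfold score
  have key : ∀ i : ι, (∀ w, w ≠ b → Prof2 a b S i b w) ↔ i ∈ (Sᶜ : Finset ι) := by
    intro i
    rw [Finset.mem_compl]
    unfold Prof2
    constructor
    · intro h
      have ha := h a hab
      intro hi
      rw [if_pos hi] at ha
      exact hab ha.1.symm
    · intro hi w hw
      rw [if_neg hi]
      rcases hall w with rfl | rfl
      · exact ⟨rfl, rfl⟩
      · exact absurd rfl hw
  rw [Nat.card_congr (Equiv.subtypeEquivRight key)]
  exact Nat.card_eq_finsetCard _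

theorem exists_perm_finset {S T : Finset ι} (h : S.card = T.card) :
    ∃ π : Equiv.Perm ι, ∀ i, π i ∈ S ↔ i ∈ T := by
  classical
  have e1 : {i // i ∈ T} ≃ {i // i ∈ S} := Finset.equivOfCardEq h.symm
  have e2 : {i // ¬ i ∈ T} ≃ {i // ¬ i ∈ S} := by
    apply Fintype.equivOfCardEq
    rw [Fintype.card_subtype_compl, Fintype.card_subtype_compl,
      Fintype.card_coe, Fintype.card_coe, h]
  refine ⟨((Equiv.sumCompl (· ∈ T)).symm.trans
    ((e1.sumCongr e2).trans (Equiv.sumCompl (· ∈ S)))), fun i => ?_⟩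
  by_cases hi : i ∈ T
  · simp only [Equiv.trans_apply, Equiv.sumCompl_symm_apply_of_pos hi,
      Equiv.sumCongr_apply, Sum.map_inl, Equiv.sumCompl_apply_inl]
    exact iff_of_true (e1 ⟨i, hi⟩).2 hi
  · simp only [Equiv.trans_apply, Equiv.sumCompl_symm_apply_of_neg hi,
      Equiv.sumCongr_apply, Sum.map_inr, Equiv.sumCompl_apply_inr]
    exact iff_of_false (e2 ⟨i, hi⟩).2 hi

end Aux

section Aux2

open Classical

variable {ι A : Type*} [Fintype ι] [Fintype A]

theorem f_prof2_card_eq (f : (ι → A → A → Prop) → Set A) (hanon : Anonymous f)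
    (a b : A) (hab : a ≠ b) (hall : ∀ z : A, z = a ∨ z = b)
    {S T : Finset ι} (h : S.card = T.card) :
    f (Prof2 a b S) = f (Prof2 a b T) := by
  obtain ⟨π, hπ⟩ := exists_perm_finset h
  have hfun : (fun i => Prof2 a b S (π i)) = Prof2 a b T := by
    funext i x y
    show Prof2 a b S (π i) x y = _
    unfold Prof2
    by_cases hi : i ∈ T
    · rw [if_pos ((hπ i).2 hi), if_pos hi]
    · rw [if_neg (fun hs => hi ((hπ i).1 hs)), if_neg hi]
  calc f (Prof2 a b S) = f (fun i => Prof2 a b S (π i)) :=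
        (hanon π _ (isProfile_prof2 a b hab hall S)).symm
    _ = f (Prof2 a b T) := by rw [hfun]

theorem mono_prof2 (f : (ι → A → A → Prop) → Set A) (hmono : Monotonic f)
    (a b : A) (hab : a ≠ b) (hall : ∀ z : A, z = a ∨ z = b)
    {S T : Finset ι} (hST : S ⊆ T) (ha : a ∈ f (Prof2 a b S)) :
    a ∈ f (Prof2 a b T) := by
  refine hmono (Prof2 a b S) (Prof2 a b T) a (isProfile_prof2 a b hab hall S)
    (isProfile_prof2 a b hab hall T) ⟨?_, ?_⟩ ha
  · intro i y hy hP
    unfold Prof2 at hP ⊢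
    by_cases hi : i ∈ S
    · rw [if_pos hi] at hP
      rw [if_pos (hST hi)]
      exact hP
    · rw [if_neg hi] at hP
      exact absurd hP.1 hab
  · intro i y z hy hz
    have hyb : y = b := (hall y).resolve_left hy
    have hzb : z = b := (hall z).resolve_left hz
    rw [hyb, hzb]
    unfold Prof2
    have hba : b ≠ a := Ne.symm hab
    split_ifs <;> simp [hba]

theorem neutral_prof2 (f : (ι → A → A → Prop) → Set A) (hneu : Neutral f)
    (a b : A) (hab : a ≠ b) (hall : ∀ z : A, z = a ∨ z = b) (S : Finset ι) :
    b ∈ f (Prof2 a b S) ↔ a ∈ f (Prof2 a b (Sᶜ : Finset ι)) := by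
  have hswap : (fun i x y => Prof2 a b S i ((Equiv.swap a b).symm x) ((Equiv.swap a b).symm y))
      = Prof2 a b (Sᶜ : Finset ι) := by
    funext i x y
    rcases hall x with rfl | rfl <;> rcases hall y with rfl | rfl <;>
      by_cases hi : i ∈ S <;>
        simp [Prof2, hi, Equiv.symm_swap, Equiv.swap_apply_left, Equiv.swap_apply_right,
          hab, Ne.symm hab, Finset.mem_compl]
  have hkey := hneu (Equiv.swap a b) (Prof2 a b S) (isProfile_prof2 a b hab hall S)
  rw [hswap] at hkey
  rw [hkey]
  constructor
  · intro hb
    exact ⟨b, hb, Equiv.swap_apply_right a b⟩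
  · rintro ⟨z, hz, hza⟩
    rcases hall z with rfl | rfl
    · rw [Equiv.swap_apply_left] at hza
      exact absurd hza.symm hab
    · exact hz

end Aux2

open Classical in
/-- May's theorem for quota rules: over two alternatives, every anonymous,
neutral and monotonic SCF is a quota rule `Q_q` with `n/2 < q ≤ n+1`. -/
theorem mays_theorem_quota {ι A : Type*} [Fintype ι] [Fintype A]
    (hA : Fintype.card A = 2)
    (f : (ι → A → A → Prop) → Set A)
    (hne : ∀ P, IsProfile P → (f P).Nonempty)
    (hanon : Anonymous f) (hneu : Neutral f) (hmono : Monotonic f) :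
    ∃ q : ℕ, Fintype.card ι < 2 * q ∧ q ≤ Fintype.card ι + 1 ∧
      ∀ P, IsProfile P → f P = Quota q P := by
  classical
  obtain ⟨a, b, hab, hall⟩ : ∃ a b : A, a ≠ b ∧ ∀ z : A, z = a ∨ z = b := by
    have h2 : Nat.card A = 2 := by rw [Nat.card_eq_fintype_card, hA]
    rw [Nat.card_eq_two_iff] at h2
    obtain ⟨a, b, hab', h⟩ := h2
    refine ⟨a, b, hab', fun z => ?_⟩
    have hz : z ∈ ({a, b} : Set A) := h.symm ▸ Set.mem_univ z
    simpa using hz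
  set n := Fintype.card ι with hn
  have hcard_le : ∀ S : Finset ι, S.card ≤ n := fun S => Finset.card_le_univ S
  have hcompl : ∀ S : Finset ι, (Sᶜ : Finset ι).card = n - S.card := fun S =>
    Finset.card_compl S
  set D : ℕ → Prop := fun k => ∃ S : Finset ι, S.card = k ∧ a ∈ f (Prof2 a b S) with hD
  have hDiff : ∀ S : Finset ι, (a ∈ f (Prof2 a b S) ↔ D S.card) := by
    intro S
    constructor
    · exact fun h => ⟨S, rfl, h⟩
    · rintro ⟨T, hT, haT⟩
      rw [← f_prof2_card_eq f hanon a b hab hall hT]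
      exact haT
  have hbiff : ∀ S : Finset ι, (b ∈ f (Prof2 a b S) ↔ D (n - S.card)) := by
    intro S
    rw [neutral_prof2 f hneu a b hab hall S, hDiff, hcompl]
  have hDmono : ∀ {k l : ℕ}, D k → k ≤ l → l ≤ n → D l := by
    rintro k l ⟨S, hSk, haS⟩ hkl hln
    obtain ⟨T, hST, hT⟩ := Finset.exists_superset_card_eq (s := S) (by omega) hln
    exact ⟨T, hT, mono_prof2 f hmono a b hab hall hST haS⟩
  have hDn : D n := by
    obtain ⟨z, hz⟩ := hne (Prof2 a b (∅ : Finset ι)) (isProfile_prof2 a b hab hall ∅)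
    rcases hall z with rfl | rfl
    · exact hDmono ((hDiff ∅).1 hz) (by simp) le_rfl
    · have h := (hbiff ∅).1 hz
      simpa using h
  have hex : ∃ k, D k := ⟨n, hDn⟩
  set q0 := Nat.find hex with hq0def
  have hq0 : D q0 := Nat.find_spec hex
  have hq0n : q0 ≤ n := Nat.find_le hDn
  have hDk_iff : ∀ k, k ≤ n → (D k ↔ q0 ≤ k) := by
    intro k hk
    constructor
    · intro h
      by_contra hlt
      exact Nat.find_min hex (by omega) h
    · intro h
      exact hDmono hq0 h hk
  have hdisj : ∀ S : Finset ι, q0 ≤ S.card ∨ q0 ≤ n - S.card := by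
    intro S
    obtain ⟨z, hz⟩ := hne (Prof2 a b S) (isProfile_prof2 a b hab hall S)
    rcases hall z with rfl | rfl
    · exact Or.inl ((hDk_iff _ (hcard_le S)).1 ((hDiff S).1 hz))
    · exact Or.inr ((hDk_iff _ (by omega)).1 ((hbiff S).1 hz))
  have hqa : q0 ≤ max q0 (n + 1 - q0) := le_max_left _ _
  have hqb : n + 1 - q0 ≤ max q0 (n + 1 - q0) := le_max_right _ _
  have hqc : max q0 (n + 1 - q0) = q0 ∨ max q0 (n + 1 - q0) = n + 1 - q0 := max_choice _ _
  refine ⟨max q0 (n + 1 - q0), by omega, by omega, ?_⟩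
  intro P hP
  obtain ⟨S, hPS⟩ : ∃ S : Finset ι, P = Prof2 a b S :=
    ⟨_, eq_prof2 a b hab hall P hP⟩
  rw [hPS]
  have hka : score (Prof2 a b S) a = S.card := score_prof2_a a b hab hall S
  have hkb : score (Prof2 a b S) b = n - S.card := by
    rw [score_prof2_b a b hab hall S, hcompl]
  have haf : a ∈ f (Prof2 a b S) ↔ q0 ≤ S.card := by
    rw [hDiff S, hDk_iff _ (hcard_le S)]
  have hbf : b ∈ f (Prof2 a b S) ↔ q0 ≤ n - S.card := by
    rw [hbiff S, hDk_iff _ (by omega)]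
  have hquota : ∀ w : A, (w ∈ Quota (max q0 (n + 1 - q0)) (Prof2 a b S)) ↔
      (max q0 (n + 1 - q0) ≤ score (Prof2 a b S) w ∨
        (S.card < max q0 (n + 1 - q0) ∧ n - S.card < max q0 (n + 1 - q0))) := by
    intro w
    unfold Quota
    simp only [Set.mem_setOf_eq]
    constructor
    · rintro (h | h)
      · exact Or.inl h
      · exact Or.inr ⟨by rw [← hka]; exact h a, by rw [← hkb]; exact h b⟩
    · rintro (h | ⟨h1, h2⟩)
      · exact Or.inl h
      · refine Or.inr fun w' => ?_
        rcases hall w' with rfl | rfl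
        · rw [hka]; exact h1
        · rw [hkb]; exact h2
  ext z
  have hkn : S.card ≤ n := hcard_le S
  have hd := hdisj S
  rcases hall z with rfl | rfl
  · rw [haf, hquota, hka]
    omega
  · rw [hbf, hquota, hkb]
    omega
end

section
/- Condorcet jury recursion: if in a population of independent voters each votes correctly with probability p ∈ (1/2, 1], and p_n denotes the probability that a strict majority of n voters (n odd) votes correctly, then p_{n+2} = p_n + (2p - 1) · C(n, (n+1)/2) · (p(1-p))^{(n+1)/2}; consequently p_{n+2} ≥ p_n for every odd n. -/
/-- The probability that a strict majority of `n` i.i.d. votes, each correct with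
probability `p`, is correct (for odd `n`):
`p_n = ∑_{h=(n+1)/2}^{n} C(n,h) p^h (1-p)^(n-h)`. -/
noncomputable def majProb (p : ℝ) (n : ℕ) : ℝ :=
  ∑ h ∈ Finset.Icc ((n + 1) / 2) n, (n.choose h : ℝ) * p ^ h * (1 - p) ^ (n - h)

/-- Condorcet jury recursion:
`p_{n+2} = p_n + (2p-1) * C(n,(n+1)/2) * (p(1-p))^((n+1)/2)`, hence `p_n ≤ p_{n+2}`. -/
theorem jury_recursion (p : ℝ) (hp : 1 / 2 < p) (hp1 : p ≤ 1) (n : ℕ) (hn : Odd n) :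
    majProb p (n + 2) =
      majProb p n +
        (2 * p - 1) * (n.choose ((n + 1) / 2) : ℝ) * (p * (1 - p)) ^ ((n + 1) / 2) ∧
    majProb p n ≤ majProb p (n + 2) := by
  obtain ⟨k, rfl⟩ := hn
  set q : ℝ := 1 - p with hq
  set f : ℕ → ℝ := fun j => ((2 * k + 1).choose j : ℝ) * p ^ j * q ^ (2 * k + 1 - j)
    with hf
  set P : ℝ := ∑ j ∈ Finset.Icc (k + 1) (2 * k + 1), f j with hP
  have hmaj : majProb p (2 * k + 1) = P := by
    rw [majProb, show (2 * k + 1 + 1) / 2 = k + 1 by omega]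
  -- reindexing helper
  have reidx : ∀ c a b : ℕ, ∑ j ∈ Finset.Icc a b, f (c + j)
      = ∑ h ∈ Finset.Icc (c + a) (c + b), f h := by
    intro c a b
    rw [← Finset.map_add_left_Icc, Finset.sum_map]
    simp [addLeftEmbedding_apply]
  -- vanishing terms
  have hz : ∀ j : ℕ, 2 * k + 1 < j → f j = 0 := by
    intro j hj
    simp only [hf]
    rw [Nat.choose_eq_zero_of_lt hj]
    simp
  -- Step 1: reindex the (n+2) sum
  have h1 : majProb p (2 * k + 1 + 2) = ∑ j ∈ Finset.Icc k (2 * k + 1),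
      (((2 * k + 3).choose (2 + j) : ℝ) * p ^ (2 + j) * q ^ (2 * k + 1 - j)) := by
    rw [majProb, show (2 * k + 1 + 2 + 1) / 2 = 2 + k by omega,
      show 2 * k + 1 + 2 = 2 + (2 * k + 1) by omega,
      ← Finset.map_add_left_Icc, Finset.sum_map]
    refine Finset.sum_congr rfl fun j hj => ?_
    simp only [addLeftEmbedding_apply]
    rw [show 2 + (2 * k + 1) - (2 + j) = 2 * k + 1 - j by omega,
      show 2 + (2 * k + 1) = 2 * k + 3 by omega, hq]
  -- Pascal twice
  have hch : ∀ j : ℕ, ((2 * k + 3).choose (2 + j) : ℝ) =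
      ((2 * k + 1).choose j : ℝ) + 2 * ((2 * k + 1).choose (j + 1) : ℝ)
        + ((2 * k + 1).choose (j + 2) : ℝ) := by
    intro j
    have : (2 * k + 3).choose (2 + j) =
        (2 * k + 1).choose j + 2 * (2 * k + 1).choose (j + 1)
          + (2 * k + 1).choose (j + 2) := by
      have e1 : (2 * k + 3).choose (j + 2)
          = (2 * k + 2).choose (j + 1) + (2 * k + 2).choose (j + 2) :=
        Nat.choose_succ_succ' (2 * k + 2) (j + 1)
      have e2 : (2 * k + 2).choose (j + 1)
          = (2 * k + 1).choose j + (2 * k + 1).choose (j + 1) :=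
        Nat.choose_succ_succ' (2 * k + 1) j
      have e3 : (2 * k + 2).choose (j + 2)
          = (2 * k + 1).choose (j + 1) + (2 * k + 1).choose (j + 2) :=
        Nat.choose_succ_succ' (2 * k + 1) (j + 1)
      have e4 : 2 + j = j + 2 := by omega
      rw [e4]
      omega
    exact_mod_cast this
  -- split into three sums
  have h2 : majProb p (2 * k + 1 + 2) =
      (∑ j ∈ Finset.Icc k (2 * k + 1), p ^ 2 * f j)
      + (∑ j ∈ Finset.Icc k (2 * k + 1), 2 * p * q * f (j + 1))
      + (∑ j ∈ Finset.Icc k (2 * k + 1), q ^ 2 * f (j + 2)) := by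
    rw [h1, ← Finset.sum_add_distrib, ← Finset.sum_add_distrib]
    refine Finset.sum_congr rfl fun j hj => ?_
    simp only [Finset.mem_Icc] at hj
    rw [hch j]
    simp only [hf]
    have e1 : (2 * k + 1 : ℕ) - j = (2 * k + 1 - j : ℕ) := rfl
    -- handle the three parts
    have partB : 2 * ((2 * k + 1).choose (j + 1) : ℝ) * p ^ (2 + j) * q ^ (2 * k + 1 - j)
        = 2 * p * q * (((2 * k + 1).choose (j + 1) : ℝ) * p ^ (j + 1)
            * q ^ (2 * k + 1 - (j + 1))) := by
      rcases Nat.lt_or_ge j (2 * k + 1) with h | h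
      · rw [show 2 * k + 1 - j = (2 * k + 1 - (j + 1)) + 1 by omega]
        ring
      · rw [Nat.choose_eq_zero_of_lt (by omega : 2 * k + 1 < j + 1)]
        simp
    have partC : ((2 * k + 1).choose (j + 2) : ℝ) * p ^ (2 + j) * q ^ (2 * k + 1 - j)
        = q ^ 2 * (((2 * k + 1).choose (j + 2) : ℝ) * p ^ (j + 2)
            * q ^ (2 * k + 1 - (j + 2))) := by
      rcases Nat.lt_or_ge (j + 2) (2 * k + 2) with h | h
      · rw [show 2 * k + 1 - j = (2 * k + 1 - (j + 2)) + 2 by omega]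
        ring
      · rw [Nat.choose_eq_zero_of_lt (by omega : 2 * k + 1 < j + 2)]
        simp
    calc (((2 * k + 1).choose j : ℝ) + 2 * ((2 * k + 1).choose (j + 1) : ℝ)
          + ((2 * k + 1).choose (j + 2) : ℝ)) * p ^ (2 + j) * q ^ (2 * k + 1 - j)
        = ((2 * k + 1).choose j : ℝ) * p ^ (2 + j) * q ^ (2 * k + 1 - j)
          + 2 * ((2 * k + 1).choose (j + 1) : ℝ) * p ^ (2 + j) * q ^ (2 * k + 1 - j)
          + ((2 * k + 1).choose (j + 2) : ℝ) * p ^ (2 + j) * q ^ (2 * k + 1 - j) := by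
          ring
      _ = _ := by
          rw [partB, partC]
          ring_nf
  -- evaluate the three sums
  have hS0 : ∑ j ∈ Finset.Icc k (2 * k + 1), p ^ 2 * f j = p ^ 2 * (f k + P) := by
    rw [← Finset.mul_sum, ← Finset.insert_Icc_add_one_left_eq_Icc (by omega : k ≤ 2 * k + 1),
      Finset.sum_insert (by simp)]
  have hS1 : ∑ j ∈ Finset.Icc k (2 * k + 1), 2 * p * q * f (j + 1)
      = 2 * p * q * P := by
    rw [← Finset.mul_sum]
    congr 1
    calc ∑ j ∈ Finset.Icc k (2 * k + 1), f (j + 1)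
        = ∑ j ∈ Finset.Icc k (2 * k + 1), f (1 + j) := by
          refine Finset.sum_congr rfl fun j _ => ?_
          rw [Nat.add_comm]
      _ = ∑ h ∈ Finset.Icc (k + 1) (2 * k + 2), f h := by
          rw [reidx 1 k (2 * k + 1), show (1 : ℕ) + k = k + 1 by omega,
            show 1 + (2 * k + 1) = 2 * k + 2 by omega]
      _ = P := by
          rw [show (2 * k + 2 : ℕ) = 2 * k + 1 + 1 by omega,
            ← Finset.insert_Icc_right_eq_Icc_add_one (by omega : k + 1 ≤ 2 * k + 1 + 1),
            Finset.sum_insert (by simp), hz (2 * k + 1 + 1) (by omega)]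
          simp [hP]
  have hS2 : ∑ j ∈ Finset.Icc k (2 * k + 1), q ^ 2 * f (j + 2)
      = q ^ 2 * (P - f (k + 1)) := by
    rw [← Finset.mul_sum]
    congr 1
    have hPsplit : P = f (k + 1) + ∑ j ∈ Finset.Icc (k + 2) (2 * k + 1), f j := by
      rw [hP, ← Finset.insert_Icc_add_one_left_eq_Icc (by omega : k + 1 ≤ 2 * k + 1),
        Finset.sum_insert (by simp)]
      rfl
    calc ∑ j ∈ Finset.Icc k (2 * k + 1), f (j + 2)
        = ∑ j ∈ Finset.Icc k (2 * k + 1), f (2 + j) := by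
          refine Finset.sum_congr rfl fun j _ => ?_
          rw [Nat.add_comm]
      _ = ∑ h ∈ Finset.Icc (k + 2) (2 * k + 3), f h := by
          rw [reidx 2 k (2 * k + 1), show (2 : ℕ) + k = k + 2 by omega,
            show 2 + (2 * k + 1) = 2 * k + 3 by omega]
      _ = ∑ h ∈ Finset.Icc (k + 2) (2 * k + 1), f h := by
          rw [show (2 * k + 3 : ℕ) = (2 * k + 2) + 1 by omega,
            ← Finset.insert_Icc_right_eq_Icc_add_one (by omega : k + 2 ≤ 2 * k + 2 + 1),
            Finset.sum_insert (by simp),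
            show (2 * k + 2 : ℕ) = (2 * k + 1) + 1 by omega,
            ← Finset.insert_Icc_right_eq_Icc_add_one (by omega : k + 2 ≤ 2 * k + 1 + 1),
            Finset.sum_insert (by simp),
            hz (2 * k + 2 + 1) (by omega), hz (2 * k + 1 + 1) (by omega)]
          ring
      _ = P - f (k + 1) := by rw [hPsplit]; ring
  -- the key identity
  have hfk : f k = ((2 * k + 1).choose (k + 1) : ℝ) * p ^ k * q ^ (k + 1) := by
    simp only [hf]
    rw [show (2 * k + 1 : ℕ) - k = k + 1 by omega, Nat.choose_symm_half]
  have hfk1 : f (k + 1) = ((2 * k + 1).choose (k + 1) : ℝ) * p ^ (k + 1) * q ^ k := by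
    simp only [hf]
    rw [show (2 * k + 1 : ℕ) - (k + 1) = k by omega]
  have key : majProb p (2 * k + 1 + 2) = majProb p (2 * k + 1) +
      (2 * p - 1) * ((2 * k + 1).choose ((2 * k + 1 + 1) / 2) : ℝ)
        * (p * (1 - p)) ^ ((2 * k + 1 + 1) / 2) := by
    rw [h2, hS0, hS1, hS2, hmaj, show (2 * k + 1 + 1) / 2 = k + 1 by omega,
      hfk, hfk1, ← hq]
    rw [mul_pow, hq]
    ring
  refine ⟨key, ?_⟩
  rw [key]
  have h0 : (0 : ℝ) ≤ 2 * p - 1 := by linarith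
  have h1' : (0 : ℝ) ≤ p * (1 - p) := by nlinarith
  have h2' : (0 : ℝ) ≤ ((2 * k + 1).choose ((2 * k + 1 + 1) / 2) : ℝ) :=
    Nat.cast_nonneg _
  nlinarith [mul_nonneg (mul_nonneg h0 h2') (pow_nonneg h1' ((2 * k + 1 + 1) / 2))]
end

section
/- Non-asymptotic jury theorem: for every odd n and p ∈ (1/2, 1], the majority accuracy p_n = ∑_{h=(n+1)/2}^{n} C(n,h) p^h (1-p)^{n-h} satisfies p ≤ p_n. -/
/-- Tail of the binomial distribution with `2*m+1` trials, from `a` up. -/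
noncomputable def juryTail (p : ℝ) (m a : ℕ) : ℝ :=
  ∑ k ∈ Finset.Icc a (2 * m + 1), ((2 * m + 1).choose k : ℝ) * p ^ k * (1 - p) ^ (2 * m + 1 - k)

lemma juryTail_eq_add (p : ℝ) (m a : ℕ) (ha : a ≤ 2 * m + 1) :
    juryTail p m a
      = ((2 * m + 1).choose a : ℝ) * p ^ a * (1 - p) ^ (2 * m + 1 - a) + juryTail p m (a + 1) := by
  unfold juryTail
  rw [show Finset.Icc a (2 * m + 1) = insert a (Finset.Icc (a + 1) (2 * m + 1)) from
    Finset.ext fun x => by simp only [Finset.mem_insert, Finset.mem_Icc]; omega,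
    Finset.sum_insert (by simp)]

lemma majProb_odd (p : ℝ) (m : ℕ) : majProb p (2 * m + 1) = juryTail p m (m + 1) := by
  unfold majProb juryTail
  congr 1
  congr 1
  omega

lemma jury_sum1 (p : ℝ) (m : ℕ) :
    ∑ j ∈ Finset.Icc m (2 * m + 1),
        ((2 * m + 1).choose j : ℝ) * p ^ (j + 2) * (1 - p) ^ (2 * m + 1 - j)
      = p ^ 2 * juryTail p m m := by
  unfold juryTail
  rw [Finset.mul_sum]
  refine Finset.sum_congr rfl fun j _ => ?_
  ring

lemma jury_sum2 (p : ℝ) (m : ℕ) :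
    ∑ j ∈ Finset.Icc m (2 * m + 1),
        ((2 * m + 1).choose (j + 1) : ℝ) * p ^ (j + 2) * (1 - p) ^ (2 * m + 1 - j)
      = p * (1 - p) * juryTail p m (m + 1) := by
  have h : ∑ j ∈ Finset.Icc m (2 * m + 1),
        ((2 * m + 1).choose (j + 1) : ℝ) * p ^ (j + 2) * (1 - p) ^ (2 * m + 1 - j)
      = ∑ k ∈ Finset.Icc (m + 1) (2 * m + 2),
        ((2 * m + 1).choose k : ℝ) * p ^ (k + 1) * (1 - p) ^ (2 * m + 2 - k) := by
    rw [show Finset.Icc (m + 1) (2 * m + 2)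
        = Finset.map (addRightEmbedding 1) (Finset.Icc m (2 * m + 1)) by
      rw [Finset.map_add_right_Icc], Finset.sum_map]
    refine Finset.sum_congr rfl fun j _ => ?_
    simp only [addRightEmbedding, Function.Embedding.coeFn_mk]
    congr 2
    omega
  rw [h, Finset.sum_Icc_succ_top (by omega)]
  rw [show (2 * m + 1).choose (2 * m + 2) = 0 from Nat.choose_eq_zero_of_lt (by omega)]
  unfold juryTail
  rw [Finset.mul_sum]
  push_cast
  rw [zero_mul, zero_mul, add_zero]
  refine Finset.sum_congr rfl fun k hk => ?_
  simp only [Finset.mem_Icc] at hk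
  rw [show 2 * m + 2 - k = (2 * m + 1 - k) + 1 by omega, pow_succ]
  ring

lemma jury_sum3 (p : ℝ) (m : ℕ) :
    ∑ j ∈ Finset.Icc m (2 * m + 1),
        ((2 * m + 1).choose (j + 2) : ℝ) * p ^ (j + 2) * (1 - p) ^ (2 * m + 1 - j)
      = (1 - p) ^ 2 * juryTail p m (m + 2) := by
  have h : ∑ j ∈ Finset.Icc m (2 * m + 1),
        ((2 * m + 1).choose (j + 2) : ℝ) * p ^ (j + 2) * (1 - p) ^ (2 * m + 1 - j)
      = ∑ k ∈ Finset.Icc (m + 2) (2 * m + 3),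
        ((2 * m + 1).choose k : ℝ) * p ^ k * (1 - p) ^ (2 * m + 3 - k) := by
    rw [show Finset.Icc (m + 2) (2 * m + 3)
        = Finset.map (addRightEmbedding 2) (Finset.Icc m (2 * m + 1)) by
      rw [Finset.map_add_right_Icc], Finset.sum_map]
    refine Finset.sum_congr rfl fun j _ => ?_
    simp only [addRightEmbedding, Function.Embedding.coeFn_mk]
    congr 2
    omega
  rw [h, show 2 * m + 3 = (2 * m + 2) + 1 from rfl, Finset.sum_Icc_succ_top (by omega),
    Finset.sum_Icc_succ_top (by omega)]
  rw [show (2 * m + 1).choose (2 * m + 2) = 0 from Nat.choose_eq_zero_of_lt (by omega),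
    show (2 * m + 1).choose (2 * m + 2 + 1) = 0 from Nat.choose_eq_zero_of_lt (by omega)]
  push_cast
  rw [zero_mul, zero_mul, zero_mul, zero_mul, add_zero, add_zero]
  unfold juryTail
  rw [Finset.mul_sum]
  refine Finset.sum_congr rfl fun k hk => ?_
  simp only [Finset.mem_Icc] at hk
  rw [show 2 * m + 2 + 1 - k = (2 * m + 1 - k) + 2 by omega, pow_add]
  ring

lemma jury_step (p : ℝ) (m : ℕ) :
    majProb p (2 * m + 3)
      = majProb p (2 * m + 1)
        + ((2 * m + 1).choose (m + 1) : ℝ) * p ^ (m + 1) * (1 - p) ^ (m + 1) * (2 * p - 1) := by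
  have h1 : majProb p (2 * m + 3)
      = ∑ j ∈ Finset.Icc m (2 * m + 1),
          ((2 * m + 3).choose (j + 2) : ℝ) * p ^ (j + 2) * (1 - p) ^ (2 * m + 1 - j) := by
    unfold majProb
    rw [show (2 * m + 3 + 1) / 2 = m + 2 by omega,
      show Finset.Icc (m + 2) (2 * m + 3)
        = Finset.map (addRightEmbedding 2) (Finset.Icc m (2 * m + 1)) by
      rw [Finset.map_add_right_Icc], Finset.sum_map]
    refine Finset.sum_congr rfl fun j _ => ?_
    simp only [addRightEmbedding, Function.Embedding.coeFn_mk]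
    congr 2
    omega
  have hpascal : ∀ j : ℕ, ((2 * m + 3).choose (j + 2) : ℝ)
      = ((2 * m + 1).choose j : ℝ) + 2 * ((2 * m + 1).choose (j + 1) : ℝ)
        + ((2 * m + 1).choose (j + 2) : ℝ) := by
    intro j
    have a1 : (2 * m + 3).choose (j + 2)
        = (2 * m + 2).choose (j + 1) + (2 * m + 2).choose (j + 2) :=
      Nat.choose_succ_succ (2 * m + 2) (j + 1)
    have a2 : (2 * m + 2).choose (j + 1)
        = (2 * m + 1).choose j + (2 * m + 1).choose (j + 1) :=
      Nat.choose_succ_succ (2 * m + 1) j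
    have a3 : (2 * m + 2).choose (j + 2)
        = (2 * m + 1).choose (j + 1) + (2 * m + 1).choose (j + 2) :=
      Nat.choose_succ_succ (2 * m + 1) (j + 1)
    have : (2 * m + 3).choose (j + 2)
        = (2 * m + 1).choose j + 2 * (2 * m + 1).choose (j + 1) + (2 * m + 1).choose (j + 2) := by
      omega
    rw [this]; push_cast; ring
  have h2 : majProb p (2 * m + 3)
      = p ^ 2 * juryTail p m m + 2 * (p * (1 - p) * juryTail p m (m + 1))
        + (1 - p) ^ 2 * juryTail p m (m + 2) := by
    rw [h1, ← jury_sum1, ← jury_sum2, ← jury_sum3, Finset.mul_sum,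
      ← Finset.sum_add_distrib, ← Finset.sum_add_distrib]
    refine Finset.sum_congr rfl fun j _ => ?_
    rw [hpascal j]
    ring
  have e1 : juryTail p m m
      = ((2 * m + 1).choose m : ℝ) * p ^ m * (1 - p) ^ (m + 1) + juryTail p m (m + 1) := by
    rw [juryTail_eq_add p m m (by omega), show 2 * m + 1 - m = m + 1 by omega]
  have e2 : juryTail p m (m + 1)
      = ((2 * m + 1).choose (m + 1) : ℝ) * p ^ (m + 1) * (1 - p) ^ m + juryTail p m (m + 2) := by
    rw [juryTail_eq_add p m (m + 1) (by omega), show 2 * m + 1 - (m + 1) = m by omega]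
  have hsymm : ((2 * m + 1).choose m : ℝ) = ((2 * m + 1).choose (m + 1) : ℝ) := by
    rw [show (2 * m + 1).choose m = (2 * m + 1).choose (m + 1) by
      rw [← Nat.choose_symm (by omega : m + 1 ≤ 2 * m + 1)]
      congr 1
      omega]
  rw [h2, majProb_odd, e1, hsymm]
  have e3 : juryTail p m (m + 2)
      = juryTail p m (m + 1) - ((2 * m + 1).choose (m + 1) : ℝ) * p ^ (m + 1) * (1 - p) ^ m := by
    rw [e2]; ring
  rw [e3]
  ring

/-- Non-asymptotic jury theorem: the majority of an odd number of voters is at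
least as accurate as a single voter. -/
theorem jury_nonasymptotic (p : ℝ) (hp : 1 / 2 < p) (hp1 : p ≤ 1)
    (n : ℕ) (hn : Odd n) :
    p ≤ majProb p n := by
  obtain ⟨m, rfl⟩ := hn
  induction m with
  | zero =>
    simp [majProb]
  | succ k ih =>
    have hstep := jury_step p k
    have hterm : 0 ≤ ((2 * k + 1).choose (k + 1) : ℝ) * p ^ (k + 1) * (1 - p) ^ (k + 1) * (2 * p - 1) := by
      have hp0 : (0:ℝ) ≤ p := by linarith
      have hq0 : (0:ℝ) ≤ 1 - p := by linarith
      have : (0:ℝ) ≤ 2 * p - 1 := by linarith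
      positivity
    calc p ≤ majProb p (2 * k + 1) := ih
    _ ≤ majProb p (2 * k + 3) := by rw [hstep]; linarith
    _ = majProb p (2 * (k + 1) + 1) := by rw [show 2 * (k + 1) + 1 = 2 * k + 3 by ring]
end

section
/- Asymptotic jury theorem: for p ∈ (1/2, 1], the probability p_n that a strict majority of n i.i.d. Bernoulli(p) votes is correct tends to 1 as n → ∞ (along odd n). -/
open Filter Finset Topology

noncomputable def minorityProb (p : ℝ) (k : ℕ) : ℝ :=
  ∑ h ∈ range (k + 1), ((2 * k + 1).choose h : ℝ) * p ^ h * (1 - p) ^ (2 * k + 1 - h)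

theorem majProb_odd_add_minorityProb (p : ℝ) (k : ℕ) :
    majProb p (2 * k + 1) + minorityProb p k = 1 := by
  have hIcc : Icc ((2 * k + 1 + 1) / 2) (2 * k + 1) = Ico (k + 1) (2 * k + 1 + 1) := by
    rw [← Ico_add_one_right_eq_Icc]
    congr 1
    omega
  rw [majProb, minorityProb, hIcc, add_comm, range_eq_Ico,
    sum_Ico_consecutive _ (Nat.zero_le _) (by omega), ← range_eq_Ico]
  calc _ = (p + (1 - p)) ^ (2 * k + 1) := by
        rw [add_pow]; exact sum_congr rfl fun h _ => by ring
    _ = 1 := by rw [add_sub_cancel, one_pow]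

theorem pow_mul_pow_sub_le_pow_mul_pow_sub {R : Type*} [CommSemiring R] [PartialOrder R]
    [IsOrderedRing R] {p q : R} (hq : 0 ≤ q) (hqp : q ≤ p) {h m n : ℕ} (hhm : h ≤ m)
    (hmn : m ≤ n) : p ^ h * q ^ (n - h) ≤ p ^ m * q ^ (n - m) := by
  have hp : 0 ≤ p := hq.trans hqp
  calc p ^ h * q ^ (n - h) = p ^ h * q ^ (m - h) * q ^ (n - m) := by
        rw [mul_assoc, ← pow_add]; congr 2; omega
    _ ≤ p ^ h * p ^ (m - h) * q ^ (n - m) := by gcongr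
    _ = p ^ m * q ^ (n - m) := by rw [← pow_add, Nat.add_sub_cancel' hhm]

theorem minorityProb_nonneg {p : ℝ} (hp0 : 0 ≤ p) (hp1 : p ≤ 1) (k : ℕ) :
    0 ≤ minorityProb p k := by
  have hq : 0 ≤ 1 - p := by linarith
  exact sum_nonneg fun h _ => by positivity

theorem minorityProb_le {p : ℝ} (hp : 1 / 2 ≤ p) (hp1 : p ≤ 1) (k : ℕ) :
    minorityProb p k ≤ (1 - p) * (4 * p * (1 - p)) ^ k := by
  have hq : 0 ≤ 1 - p := by linarith
  have hqp : 1 - p ≤ p := by linarith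
  calc minorityProb p k
      ≤ ∑ h ∈ range (k + 1), ((2 * k + 1).choose h : ℝ) * (p ^ k * (1 - p) ^ (k + 1)) := by
        refine sum_le_sum fun h hh => ?_
        rw [mul_assoc, show k + 1 = 2 * k + 1 - k by omega]
        exact mul_le_mul_of_nonneg_left (pow_mul_pow_sub_le_pow_mul_pow_sub hq hqp
          (Nat.lt_succ_iff.1 (mem_range.1 hh)) (by omega)) (Nat.cast_nonneg _)
    _ = 4 ^ k * (p ^ k * (1 - p) ^ (k + 1)) := by
        rw [← sum_mul, ← Nat.cast_sum, Nat.sum_range_choose_halfway, Nat.cast_pow, Nat.cast_ofNat]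
    _ = (1 - p) * (4 * p * (1 - p)) ^ k := by rw [mul_pow, mul_pow, pow_succ]; ring

theorem tendsto_minorityProb_zero {p : ℝ} (hp : 1 / 2 < p) (hp1 : p ≤ 1) :
    Tendsto (minorityProb p) atTop (𝓝 0) := by
  have hr0 : 0 ≤ 4 * p * (1 - p) := by nlinarith
  have hr1 : 4 * p * (1 - p) < 1 := by nlinarith [sq_pos_of_pos (sub_pos.2 hp)]
  have hgeom : Tendsto (fun k : ℕ => (1 - p) * (4 * p * (1 - p)) ^ k) atTop (𝓝 0) := by
    simpa using (tendsto_pow_atTop_nhds_zero_of_lt_one hr0 hr1).const_mul (1 - p)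
  exact squeeze_zero (minorityProb_nonneg (by linarith) hp1) (minorityProb_le hp.le hp1) hgeom

/-- Asymptotic jury theorem: along odd `n`, the majority accuracy tends to 1. -/
theorem jury_asymptotic (p : ℝ) (hp : 1 / 2 < p) (hp1 : p ≤ 1) :
    Tendsto (fun k : ℕ => majProb p (2 * k + 1)) atTop (nhds 1) := by
  have hmaj : (fun k : ℕ => majProb p (2 * k + 1)) = fun k => 1 - minorityProb p k :=
    funext fun k => eq_sub_of_add_eq (majProb_odd_add_minorityProb p k)
  rw [hmaj]
  simpa using (tendsto_minorityProb_zero hp hp1).const_sub 1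
end

section
/- Sen-style impossibility: if |A| > 2 and n ≥ 2, there is no SCF that is both Pareto and liberal. -/
/-- Pareto: a unanimously strictly dominated alternative is never chosen. -/
def ParetoSCF {ι A : Type*} (f : (ι → A → A → Prop) → Set A) : Prop :=
  ∀ P, IsProfile P → ∀ x : A, (∃ y, ∀ i, P i y x) → x ∉ f P

/-- Liberalism: every voter is two-way decisive on some pair of alternatives. -/
def Liberal {ι A : Type*} (f : (ι → A → A → Prop) → Set A) : Prop :=
  ∀ i : ι, ∃ x y : A, x ≠ y ∧ ∀ P, IsProfile P →
    (P i x y → y ∉ f P) ∧ (P i y x → x ∉ f P)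

section Helpers

variable {A : Type*} [Fintype A] [DecidableEq A]

noncomputable def pbase (a : A) : ℕ := (Fintype.equivFin A a).val

lemma pbase_lt (a : A) : pbase a < Fintype.card A := (Fintype.equivFin A a).isLt

lemma pbase_inj {a b : A} (h : pbase a = pbase b) : a = b :=
  (Fintype.equivFin A).injective (Fin.ext h)

def ofScore (s : A → ℕ) : A → A → Prop := fun a b => s b < s a

lemma ofScore_sto {s : A → ℕ} (hs : ∀ a b : A, s a = s b → a = b) :
    IsStrictTotalOrder A (ofScore s) where
  trichotomous a b := by
    rcases lt_trichotomy (s a) (s b) with h | h | h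
    · exact fun _ h2 => absurd h h2
    · exact fun _ _ => hs a b h
    · exact fun h1 _ => absurd h h1
  irrefl a := lt_irrefl _
  trans a b c h1 h2 := lt_trans h2 h1

noncomputable def sc2 (x y a : A) : ℕ :=
  if a = x then Fintype.card A + 2 else if a = y then Fintype.card A + 1 else pbase a

lemma sc2_1 {x y : A} : sc2 x y x = Fintype.card A + 2 := if_pos rfl

lemma sc2_2 {x y : A} (h : y ≠ x) : sc2 x y y = Fintype.card A + 1 := by
  unfold sc2; rw [if_neg h, if_pos rfl]

lemma sc2_other {x y a : A} (h1 : a ≠ x) (h2 : a ≠ y) : sc2 x y a = pbase a := by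
  unfold sc2; rw [if_neg h1, if_neg h2]

lemma sc2_inj {x y : A} (hxy : x ≠ y) (a b : A) (h : sc2 x y a = sc2 x y b) : a = b := by
  have ha := pbase_lt a; have hb := pbase_lt b
  unfold sc2 at h
  split_ifs at h <;> first
    | (subst_vars; rfl)
    | omega
    | exact pbase_inj h

noncomputable def sc3 (x y z a : A) : ℕ :=
  if a = x then Fintype.card A + 3 else if a = y then Fintype.card A + 2
  else if a = z then Fintype.card A + 1 else pbase a

lemma sc3_1 {x y z : A} : sc3 x y z x = Fintype.card A + 3 := if_pos rfl

lemma sc3_2 {x y z : A} (h : y ≠ x) : sc3 x y z y = Fintype.card A + 2 := by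
  unfold sc3; rw [if_neg h, if_pos rfl]

lemma sc3_3 {x y z : A} (h1 : z ≠ x) (h2 : z ≠ y) : sc3 x y z z = Fintype.card A + 1 := by
  unfold sc3; rw [if_neg h1, if_neg h2, if_pos rfl]

lemma sc3_other {x y z a : A} (h1 : a ≠ x) (h2 : a ≠ y) (h3 : a ≠ z) :
    sc3 x y z a = pbase a := by
  unfold sc3; rw [if_neg h1, if_neg h2, if_neg h3]

lemma sc3_inj {x y z : A} (hxy : x ≠ y) (hxz : x ≠ z) (hyz : y ≠ z)
    (a b : A) (h : sc3 x y z a = sc3 x y z b) : a = b := by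
  have ha := pbase_lt a; have hb := pbase_lt b
  unfold sc3 at h
  split_ifs at h <;> first
    | (subst_vars; rfl)
    | omega
    | exact pbase_inj h

noncomputable def sc4 (w x y z a : A) : ℕ :=
  if a = w then Fintype.card A + 4 else if a = x then Fintype.card A + 3
  else if a = y then Fintype.card A + 2 else if a = z then Fintype.card A + 1 else pbase a

lemma sc4_1 {w x y z : A} : sc4 w x y z w = Fintype.card A + 4 := if_pos rfl

lemma sc4_2 {w x y z : A} (h : x ≠ w) : sc4 w x y z x = Fintype.card A + 3 := by
  unfold sc4; rw [if_neg h, if_pos rfl]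

lemma sc4_3 {w x y z : A} (h1 : y ≠ w) (h2 : y ≠ x) :
    sc4 w x y z y = Fintype.card A + 2 := by
  unfold sc4; rw [if_neg h1, if_neg h2, if_pos rfl]

lemma sc4_4 {w x y z : A} (h1 : z ≠ w) (h2 : z ≠ x) (h3 : z ≠ y) :
    sc4 w x y z z = Fintype.card A + 1 := by
  unfold sc4; rw [if_neg h1, if_neg h2, if_neg h3, if_pos rfl]

lemma sc4_other {w x y z a : A} (h1 : a ≠ w) (h2 : a ≠ x) (h3 : a ≠ y) (h4 : a ≠ z) :
    sc4 w x y z a = pbase a := by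
  unfold sc4; rw [if_neg h1, if_neg h2, if_neg h3, if_neg h4]

lemma sc4_inj {w x y z : A} (hwx : w ≠ x) (hwy : w ≠ y) (hwz : w ≠ z)
    (hxy : x ≠ y) (hxz : x ≠ z) (hyz : y ≠ z)
    (a b : A) (h : sc4 w x y z a = sc4 w x y z b) : a = b := by
  have ha := pbase_lt a; have hb := pbase_lt b
  unfold sc4 at h
  split_ifs at h <;> first
    | (subst_vars; rfl)
    | omega
    | exact pbase_inj h

end Helpers

section Cases

variable {ι A : Type*} [Fintype A] [DecidableEq A] [DecidableEq ι]
variable {f : (ι → A → A → Prop) → Set A}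

lemma caseSame (hne : ∀ P, IsProfile P → (f P).Nonempty) (hpar : ParetoSCF f)
    {i j : ι} (hij : i ≠ j) {x y : A} (hxy : x ≠ y)
    (Hi : ∀ P, IsProfile P → P i x y → y ∉ f P)
    (Hj : ∀ P, IsProfile P → P j y x → x ∉ f P) : False := by
  set P : ι → A → A → Prop :=
    fun k => if k = i then ofScore (sc2 x y) else ofScore (sc2 y x) with hP
  have hPi : P i = ofScore (sc2 x y) := by rw [hP]; simp
  have hPk : ∀ k, k ≠ i → P k = ofScore (sc2 y x) := by
    intro k hk; rw [hP]; simp [hk]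
  have hprof : IsProfile P := by
    intro k
    by_cases hk : k = i
    · rw [hk, hPi]; exact ofScore_sto (sc2_inj hxy)
    · rw [hPk k hk]; exact ofScore_sto (sc2_inj hxy.symm)
  have hy : y ∉ f P := by
    refine Hi P hprof ?_
    rw [hPi]; show sc2 x y y < sc2 x y x
    rw [sc2_1, sc2_2 hxy.symm]; omega
  have hx : x ∉ f P := by
    refine Hj P hprof ?_
    rw [hPk j hij.symm]; show sc2 y x x < sc2 y x y
    rw [sc2_1, sc2_2 hxy]; omega
  have hother : ∀ v : A, v ≠ x → v ≠ y → v ∉ f P := by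
    intro v hvx hvy
    refine hpar P hprof v ⟨x, fun k => ?_⟩
    have hv := pbase_lt v
    by_cases hk : k = i
    · rw [hk, hPi]; show sc2 x y v < sc2 x y x
      rw [sc2_1, sc2_other hvx hvy]; omega
    · rw [hPk k hk]; show sc2 y x v < sc2 y x x
      rw [sc2_2 hxy, sc2_other hvy hvx]; omega
  obtain ⟨v, hv⟩ := hne P hprof
  by_cases h1 : v = x
  · exact hx (h1 ▸ hv)
  by_cases h2 : v = y
  · exact hy (h2 ▸ hv)
  exact hother v h1 h2 hv

lemma caseShared (hne : ∀ P, IsProfile P → (f P).Nonempty) (hpar : ParetoSCF f)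
    {i j : ι} (hij : i ≠ j) {a b c : A}
    (hab : a ≠ b) (hac : a ≠ c) (hbc : b ≠ c)
    (Hi : ∀ P, IsProfile P → P i a b → b ∉ f P)
    (Hj : ∀ P, IsProfile P → P j c a → a ∉ f P) : False := by
  set P : ι → A → A → Prop :=
    fun k => if k = i then ofScore (sc3 a b c) else ofScore (sc3 b c a) with hP
  have hPi : P i = ofScore (sc3 a b c) := by rw [hP]; simp
  have hPk : ∀ k, k ≠ i → P k = ofScore (sc3 b c a) := by
    intro k hk; rw [hP]; simp [hk]
  have hprof : IsProfile P := by
    intro k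
    by_cases hk : k = i
    · rw [hk, hPi]; exact ofScore_sto (sc3_inj hab hac hbc)
    · rw [hPk k hk]; exact ofScore_sto (sc3_inj hbc hab.symm hac.symm)
  have hb : b ∉ f P := by
    refine Hi P hprof ?_
    rw [hPi]; show sc3 a b c b < sc3 a b c a
    rw [sc3_1, sc3_2 hab.symm]; omega
  have ha : a ∉ f P := by
    refine Hj P hprof ?_
    rw [hPk j hij.symm]; show sc3 b c a a < sc3 b c a c
    rw [sc3_2 hbc.symm, sc3_3 hab hac]; omega
  have hc : c ∉ f P := by
    refine hpar P hprof c ⟨b, fun k => ?_⟩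
    by_cases hk : k = i
    · rw [hk, hPi]; show sc3 a b c c < sc3 a b c b
      rw [sc3_2 hab.symm, sc3_3 hac.symm hbc.symm]; omega
    · rw [hPk k hk]; show sc3 b c a c < sc3 b c a b
      rw [sc3_1, sc3_2 hbc.symm]; omega
  have hother : ∀ v : A, v ≠ a → v ≠ b → v ≠ c → v ∉ f P := by
    intro v hva hvb hvc
    refine hpar P hprof v ⟨b, fun k => ?_⟩
    have hv := pbase_lt v
    by_cases hk : k = i
    · rw [hk, hPi]; show sc3 a b c v < sc3 a b c b
      rw [sc3_2 hab.symm, sc3_other hva hvb hvc]; omega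
    · rw [hPk k hk]; show sc3 b c a v < sc3 b c a b
      rw [sc3_1, sc3_other hvb hvc hva]; omega
  obtain ⟨v, hv⟩ := hne P hprof
  by_cases h1 : v = a
  · exact ha (h1 ▸ hv)
  by_cases h2 : v = b
  · exact hb (h2 ▸ hv)
  by_cases h3 : v = c
  · exact hc (h3 ▸ hv)
  exact hother v h1 h2 h3 hv

lemma caseDisjoint (hne : ∀ P, IsProfile P → (f P).Nonempty) (hpar : ParetoSCF f)
    {i j : ι} (hij : i ≠ j) {w x y z : A}
    (hwx : w ≠ x) (hwy : w ≠ y) (hwz : w ≠ z)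
    (hxy : x ≠ y) (hxz : x ≠ z) (hyz : y ≠ z)
    (Hi : ∀ P, IsProfile P → P i x y → y ∉ f P)
    (Hj : ∀ P, IsProfile P → P j z w → w ∉ f P) : False := by
  set P : ι → A → A → Prop :=
    fun k => if k = i then ofScore (sc4 w x y z) else ofScore (sc4 y z w x) with hP
  have hPi : P i = ofScore (sc4 w x y z) := by rw [hP]; simp
  have hPk : ∀ k, k ≠ i → P k = ofScore (sc4 y z w x) := by
    intro k hk; rw [hP]; simp [hk]
  have hprof : IsProfile P := by
    intro k
    by_cases hk : k = i
    · rw [hk, hPi]; exact ofScore_sto (sc4_inj hwx hwy hwz hxy hxz hyz)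
    · rw [hPk k hk]
      exact ofScore_sto (sc4_inj hyz hwy.symm hxy.symm hwz.symm hxz.symm hwx)
  have hy : y ∉ f P := by
    refine Hi P hprof ?_
    rw [hPi]; show sc4 w x y z y < sc4 w x y z x
    rw [sc4_2 hwx.symm, sc4_3 hwy.symm hxy.symm]; omega
  have hw : w ∉ f P := by
    refine Hj P hprof ?_
    rw [hPk j hij.symm]; show sc4 y z w x w < sc4 y z w x z
    rw [sc4_2 hyz.symm, sc4_3 hwy hwz]; omega
  have hx : x ∉ f P := by
    refine hpar P hprof x ⟨w, fun k => ?_⟩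
    by_cases hk : k = i
    · rw [hk, hPi]; show sc4 w x y z x < sc4 w x y z w
      rw [sc4_1, sc4_2 hwx.symm]; omega
    · rw [hPk k hk]; show sc4 y z w x x < sc4 y z w x w
      rw [sc4_3 hwy hwz, sc4_4 hxy hxz hwx.symm]; omega
  have hz : z ∉ f P := by
    refine hpar P hprof z ⟨y, fun k => ?_⟩
    by_cases hk : k = i
    · rw [hk, hPi]; show sc4 w x y z z < sc4 w x y z y
      rw [sc4_3 hwy.symm hxy.symm, sc4_4 hwz.symm hxz.symm hyz.symm]; omega
    · rw [hPk k hk]; show sc4 y z w x z < sc4 y z w x y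
      rw [sc4_1, sc4_2 hyz.symm]; omega
  have hother : ∀ v : A, v ≠ w → v ≠ x → v ≠ y → v ≠ z → v ∉ f P := by
    intro v hvw hvx hvy hvz
    refine hpar P hprof v ⟨y, fun k => ?_⟩
    have hv := pbase_lt v
    by_cases hk : k = i
    · rw [hk, hPi]; show sc4 w x y z v < sc4 w x y z y
      rw [sc4_3 hwy.symm hxy.symm, sc4_other hvw hvx hvy hvz]; omega
    · rw [hPk k hk]; show sc4 y z w x v < sc4 y z w x y
      rw [sc4_1, sc4_other hvy hvz hvw hvx]; omega
  obtain ⟨v, hv⟩ := hne P hprof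
  by_cases h1 : v = w
  · exact hw (h1 ▸ hv)
  by_cases h2 : v = x
  · exact hx (h2 ▸ hv)
  by_cases h3 : v = y
  · exact hy (h3 ▸ hv)
  by_cases h4 : v = z
  · exact hz (h4 ▸ hv)
  exact hother v h1 h2 h3 h4 hv

end Cases

/-- Sen-style impossibility: with at least two voters and more than two
alternatives, no (nonempty-valued) SCF is both Pareto and liberal. -/
theorem no_paretian_liberal {ι A : Type*} [Fintype ι] [Fintype A]
    (hn : 2 ≤ Fintype.card ι) (hA : 2 < Fintype.card A)
    (f : (ι → A → A → Prop) → Set A)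
    (hne : ∀ P, IsProfile P → (f P).Nonempty)
    (hpar : ParetoSCF f) (hlib : Liberal f) :
    False := by
  classical
  obtain ⟨i, j, hij⟩ := Fintype.one_lt_card_iff.mp (by omega : 1 < Fintype.card ι)
  obtain ⟨x1, y1, h1ne, H1⟩ := hlib i
  obtain ⟨x2, y2, h2ne, H2⟩ := hlib j
  by_cases e1 : x2 = x1
  · by_cases e4 : y2 = y1
    · subst e1; subst e4
      exact caseSame hne hpar hij h2ne
        (fun P hp => (H1 P hp).1) (fun P hp => (H2 P hp).2)
    · -- shared element x1 = x2 : a = x1, b = y1, c = y2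
      subst e1
      exact caseShared hne hpar hij h1ne h2ne (fun h => e4 h.symm)
        (fun P hp => (H1 P hp).1) (fun P hp => (H2 P hp).2)
  · by_cases e2 : x2 = y1
    · by_cases e3 : y2 = x1
      · -- same pair, reversed orientation
        subst e2; subst e3
        exact caseSame hne hpar hij h1ne
          (fun P hp => (H1 P hp).1) (fun P hp => (H2 P hp).1)
      · -- shared element y1 = x2 : a = y1, b = x1, c = y2
        subst e2
        exact caseShared hne hpar hij h1ne.symm h2ne (fun h => e3 h.symm)
          (fun P hp => (H1 P hp).2) (fun P hp => (H2 P hp).2)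
    · by_cases e3 : y2 = x1
      · -- shared element x1 = y2 : a = x1, b = y1, c = x2
        subst e3
        exact caseShared hne hpar hij h1ne h2ne.symm (fun h => e2 h.symm)
          (fun P hp => (H1 P hp).1) (fun P hp => (H2 P hp).1)
      · by_cases e4 : y2 = y1
        · -- shared element y1 = y2 : a = y1, b = x1, c = x2
          subst e4
          exact caseShared hne hpar hij h1ne.symm h2ne.symm (fun h => e1 h.symm)
            (fun P hp => (H1 P hp).2) (fun P hp => (H2 P hp).1)
        · -- all four distinct : w = y2, x = x1, y = y1, z = x2
          exact caseDisjoint hne hpar hij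
            (fun h => e3 h) (fun h => e4 h) (fun h => h2ne h.symm)
            h1ne (fun h => e1 h.symm) (fun h => e2 h.symm)
            (fun P hp => (H1 P hp).1) (fun P hp => (H2 P hp).1)
  done
end

section
/- If a social preference function F on at least three alternatives satisfies Pareto and independence of irrelevant alternatives, then F(P) is a linear order (antisymmetric) for every profile P: the social preference never contains ties. -/
open Classical in
/-- rank function customizing ranks of x,y,z -/
noncomputable def rk {A : Type*} (x y z : A) (e : A → ℕ) (px py pz : ℕ) (a : A) : ℕ :=
  if a = x then px else if a = y then py else if a = z then pz else e a + 3

def rord {A : Type*} (r : A → ℕ) (a b : A) : Prop := r a < r b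

lemma rord_sto {A : Type*} {r : A → ℕ} (hr : Function.Injective r) :
    IsStrictTotalOrder A (rord r) := by
  haveI : IsTrichotomous A (rord r) := ⟨fun a b h1 h2 => by
    rcases lt_trichotomy (r a) (r b) with h|h|h
    exacts [absurd h h1, hr h, absurd h h2]⟩
  haveI : IsIrrefl A (rord r) := ⟨fun a => Nat.lt_irrefl _⟩
  haveI : IsTrans A (rord r) := ⟨fun a b c => Nat.lt_trans⟩
  exact { }

lemma rk_inj {A : Type*} {x y z : A} (hxy : x ≠ y) (hxz : x ≠ z) (hyz : y ≠ z)
    {e : A → ℕ} (he : Function.Injective e)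
    {px py pz : ℕ} (hpx : px < 3) (hpy : py < 3) (hpz : pz < 3)
    (h1 : px ≠ py) (h2 : px ≠ pz) (h3 : py ≠ pz) :
    Function.Injective (rk x y z e px py pz) := by
  intro a b hab
  unfold rk at hab
  split_ifs at hab <;>
    first
      | (subst_vars; rfl)
      | omega
      | exact he (by omega)

lemma sto_asymm {A : Type*} {r : A → A → Prop} (h : IsStrictTotalOrder A r) {a b : A} :
    r a b → ¬ r b a := fun h1 h2 => absurd (h.trans a b a h1 h2) (h.irrefl a)

lemma sto_total {A : Type*} {r : A → A → Prop} (h : IsStrictTotalOrder A r) {a b : A}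
    (hab : a ≠ b) (h1 : ¬ r a b) : r b a := by
  by_contra h2
  exact hab (h.trichotomous a b h1 h2)

lemma rk_x {A : Type*} (x y z : A) (e : A → ℕ) (px py pz : ℕ) :
    rk x y z e px py pz x = px := by simp [rk]

lemma rk_y {A : Type*} {x y : A} (z : A) (hxy : x ≠ y) (e : A → ℕ) (px py pz : ℕ) :
    rk x y z e px py pz y = py := by
  unfold rk; rw [if_neg (Ne.symm hxy), if_pos rfl]

lemma rk_z {A : Type*} {x y z : A} (hxz : x ≠ z) (hyz : y ≠ z) (e : A → ℕ) (px py pz : ℕ) :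
    rk x y z e px py pz z = pz := by
  unfold rk; rw [if_neg (Ne.symm hxz), if_neg (Ne.symm hyz), if_pos rfl]

lemma rord_rk {A : Type*} {x y z : A} (hxy : x ≠ y) (hxz : x ≠ z) (hyz : y ≠ z)
    (e : A → ℕ) (px py pz : ℕ) :
    (rord (rk x y z e px py pz) x y ↔ px < py) ∧
    (rord (rk x y z e px py pz) y x ↔ py < px) ∧
    (rord (rk x y z e px py pz) x z ↔ px < pz) ∧
    (rord (rk x y z e px py pz) z x ↔ pz < px) ∧
    (rord (rk x y z e px py pz) y z ↔ py < pz) ∧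
    (rord (rk x y z e px py pz) z y ↔ pz < py) := by
  unfold rord
  simp [rk_x, rk_y z hxy, rk_z hxz hyz]



/-- A social preference function maps (valid) profiles to total preorders on `A`. -/
def IsSPF {ι A : Type*} (F : (ι → A → A → Prop) → A → A → Prop) : Prop :=
  ∀ P, IsProfile P → IsTrans A (F P) ∧ IsTotal A (F P)

/-- Pareto for SPFs: unanimous strict preference for `x` over `y` puts `x`
strictly above `y` in the social preference. -/
def ParetoSPF {ι A : Type*} (F : (ι → A → A → Prop) → A → A → Prop) : Prop :=
  ∀ P, IsProfile P → ∀ x y : A, (∀ i, P i x y) → F P x y ∧ ¬ F P y x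

/-- Independence of irrelevant alternatives. -/
def IIA {ι A : Type*} (F : (ι → A → A → Prop) → A → A → Prop) : Prop :=
  ∀ P P' : ι → A → A → Prop, IsProfile P → IsProfile P' → ∀ x y : A,
    {i | P i x y} = {i | P' i x y} → (F P x y ↔ F P' x y)

/-- An SPF satisfying Pareto and IIA on more than two alternatives always
outputs a linear order: the social preference is antisymmetric (no ties). -/
theorem pareto_iia_implies_linear {ι A : Type*} [Fintype ι] [Fintype A]
    (hA : 2 < Fintype.card A)
    (F : (ι → A → A → Prop) → A → A → Prop)
    (hF : IsSPF F) (hpar : ParetoSPF F) (hiia : IIA F) :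
    ∀ P, IsProfile P → ∀ x y : A, F P x y → F P y x → x = y := by
  classical
  intro P hP x y hFxy hFyx
  by_contra hxy
  -- get a third alternative z
  obtain ⟨z, hxz, hyz⟩ : ∃ z, x ≠ z ∧ y ≠ z := by
    by_contra h
    push_neg at h
    have hsub : (Finset.univ : Finset A) ⊆ {x, y} := by
      intro a _
      by_cases hax : a = x
      · simp [hax]
      · have h1 : y = a := h a fun hh => hax hh.symm
        simp [← h1]
    have h2 : Fintype.card A ≤ 2 := by
      calc Fintype.card A = Finset.univ.card := rfl
        _ ≤ ({x, y} : Finset A).card := Finset.card_le_card hsub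
        _ ≤ 2 := Finset.card_insert_le x {y} |>.trans (by simp)
    omega
  set e : A → ℕ := fun a => ((Fintype.equivFin A) a : ℕ) with he_def
  have he : Function.Injective e := fun a b h =>
    (Fintype.equivFin A).injective (Fin.val_injective h)
  -- the four ballot templates
  -- OG : x > z > y  (ranks 0 2 1)
  -- O1 : z > y > x  (ranks 2 1 0)
  -- O2 : y > x > z  (ranks 1 0 2)
  -- O3 : y > z > x  (ranks 2 0 1)
  have hOG := rord_rk hxy hxz hyz e 0 2 1
  have hO1 := rord_rk hxy hxz hyz e 2 1 0
  have hO2 := rord_rk hxy hxz hyz e 1 0 2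
  have hO3 := rord_rk hxy hxz hyz e 2 0 1
  have stoOG : IsStrictTotalOrder A (rord (rk x y z e 0 2 1)) :=
    rord_sto (rk_inj hxy hxz hyz he (by omega) (by omega) (by omega) (by omega) (by omega) (by omega))
  have stoO1 : IsStrictTotalOrder A (rord (rk x y z e 2 1 0)) :=
    rord_sto (rk_inj hxy hxz hyz he (by omega) (by omega) (by omega) (by omega) (by omega) (by omega))
  have stoO2 : IsStrictTotalOrder A (rord (rk x y z e 1 0 2)) :=
    rord_sto (rk_inj hxy hxz hyz he (by omega) (by omega) (by omega) (by omega) (by omega) (by omega))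
  have stoO3 : IsStrictTotalOrder A (rord (rk x y z e 2 0 1)) :=
    rord_sto (rk_inj hxy hxz hyz he (by omega) (by omega) (by omega) (by omega) (by omega) (by omega))
  set P1 : ι → A → A → Prop :=
    fun i => if P i x y then rord (rk x y z e 0 2 1) else rord (rk x y z e 2 1 0) with hP1def
  set P2 : ι → A → A → Prop :=
    fun i => if P i x y then rord (rk x y z e 0 2 1) else rord (rk x y z e 1 0 2) with hP2def
  set P3 : ι → A → A → Prop :=
    fun i => if P i x y then rord (rk x y z e 0 2 1) else rord (rk x y z e 2 0 1) with hP3def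
  have hP1 : ∀ i, IsStrictTotalOrder A (P1 i) := by
    intro i; rw [hP1def]; dsimp only; split_ifs <;> assumption
  have hP2 : ∀ i, IsStrictTotalOrder A (P2 i) := by
    intro i; rw [hP2def]; dsimp only; split_ifs <;> assumption
  have hP3 : ∀ i, IsStrictTotalOrder A (P3 i) := by
    intro i; rw [hP3def]; dsimp only; split_ifs <;> assumption
  -- voter set equalities
  have hyxiff : ∀ i, P i y x ↔ ¬ P i x y := fun i =>
    ⟨fun h1 h2 => sto_asymm (hP i) h2 h1, fun h1 => sto_total (hP i) hxy h1⟩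
  have seteq_yx1 : {i | P i y x} = {i | P1 i y x} := by
    ext i
    simp only [Set.mem_setOf_eq, hP1def, hyxiff i]
    by_cases h : P i x y <;>
      simp [h, hOG.2.1, hO1.2.1]
  have seteq_yx2 : {i | P i y x} = {i | P2 i y x} := by
    ext i
    simp only [Set.mem_setOf_eq, hP2def, hyxiff i]
    by_cases h : P i x y <;>
      simp [h, hOG.2.1, hO2.2.1]
  have seteq_xy3 : {i | P i x y} = {i | P3 i x y} := by
    ext i
    simp only [Set.mem_setOf_eq, hP3def]
    by_cases h : P i x y <;>
      simp [h, hOG.1, hO3.1]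
  have seteq_yz23 : {i | P2 i y z} = {i | P3 i y z} := by
    ext i
    simp only [Set.mem_setOf_eq, hP2def, hP3def]
    by_cases h : P i x y <;>
      simp [h, hOG.2.2.2.2.1, hO2.2.2.2.2.1, hO3.2.2.2.2.1]
  have seteq_xz13 : {i | P1 i x z} = {i | P3 i x z} := by
    ext i
    simp only [Set.mem_setOf_eq, hP1def, hP3def]
    by_cases h : P i x y <;>
      simp [h, hOG.2.2.1, hO1.2.2.1, hO3.2.2.1]
  -- Pareto facts
  have t1 : F P1 z y ∧ ¬ F P1 y z := by
    refine hpar P1 hP1 z y fun i => ?_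
    rw [hP1def]; dsimp only
    split_ifs
    · exact hOG.2.2.2.2.2.mpr (by omega)
    · exact hO1.2.2.2.2.2.mpr (by omega)
  have t2 : F P2 x z ∧ ¬ F P2 z x := by
    refine hpar P2 hP2 x z fun i => ?_
    rw [hP2def]; dsimp only
    split_ifs
    · exact hOG.2.2.1.mpr (by omega)
    · exact hO2.2.2.1.mpr (by omega)
  -- transfer the tie and derive the contradiction
  have hFyx1 : F P1 y x := (hiia P P1 hP hP1 y x seteq_yx1).mp hFyx
  have hnFxz1 : ¬ F P1 x z := fun h =>
    t1.2 ((hF P1 hP1).1.trans y x z hFyx1 h)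
  have hFyx2 : F P2 y x := (hiia P P2 hP hP2 y x seteq_yx2).mp hFyx
  have hFyz2 : F P2 y z := (hF P2 hP2).1.trans y x z hFyx2 t2.1
  have hFyz3 : F P3 y z := (hiia P2 P3 hP2 hP3 y z seteq_yz23).mp hFyz2
  have hFxy3 : F P3 x y := (hiia P P3 hP hP3 x y seteq_xy3).mp hFxy
  have hFxz3 : F P3 x z := (hF P3 hP3).1.trans x y z hFxy3 hFyz3
  exact hnFxz1 ((hiia P1 P3 hP1 hP3 x z seteq_xz13).mpr hFxz3)
end

section
/- Contagion lemma: for an SPF F satisfying Pareto and IIA on at least three alternatives, if a coalition C is decisive for some ordered pair of distinct alternatives (x, y), then C is decisive for every ordered pair of distinct alternatives. -/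
/-- Coalition `C` is decisive for `x` over `y`: whenever all members of `C`
strictly prefer `x` to `y`, the social preference ranks `x` strictly above `y`. -/
def Decisive {ι A : Type*} (F : (ι → A → A → Prop) → A → A → Prop)
    (C : Set ι) (x y : A) : Prop :=
  ∀ P, IsProfile P → (∀ i ∈ C, P i x y) → F P x y ∧ ¬ F P y x

noncomputable def ballot {A : Type*} (f : A → ℕ) : A → A → Prop :=
  fun a b => f a < f b ∨ (f a = f b ∧ WellOrderingRel a b)

lemma ballot_sto {A : Type*} (f : A → ℕ) : IsStrictTotalOrder A (ballot f) := by
  haveI : IsWellOrder A WellOrderingRel := WellOrderingRel.isWellOrder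
  refine { trichotomous := ?_, irrefl := ?_, trans := ?_ }
  · intro a b hab hba
    rcases lt_trichotomy (f a) (f b) with h | h | h
    · exact (hab (Or.inl h)).elim
    · rcases trichotomous_of WellOrderingRel a b with hw | hw | hw
      · exact (hab (Or.inr ⟨h, hw⟩)).elim
      · exact hw
      · exact (hba (Or.inr ⟨h.symm, hw⟩)).elim
    · exact (hba (Or.inl h)).elim
  · intro a h
    rcases h with h | ⟨_, h⟩
    · exact lt_irrefl _ h
    · exact irrefl_of WellOrderingRel a h
  · intro a b c hab hbc
    rcases hab with h1 | ⟨h1, hw1⟩ <;> rcases hbc with h2 | ⟨h2, hw2⟩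
    · exact Or.inl (h1.trans h2)
    · exact Or.inl (h2 ▸ h1)
    · exact Or.inl (h1 ▸ h2)
    · exact Or.inr ⟨h1.trans h2, trans_of WellOrderingRel hw1 hw2⟩

lemma ballot_of_lt {A : Type*} {f : A → ℕ} {a b : A} (h : f a < f b) : ballot f a b :=
  Or.inl h

lemma not_ballot_of_lt {A : Type*} {f : A → ℕ} {a b : A} (h : f a < f b) :
    ¬ ballot f b a := by
  rintro (h' | ⟨h', _⟩) <;> omega

lemma sto_rev_iff {A : Type*} {R : A → A → Prop} (h : IsStrictTotalOrder A R)
    {a b : A} (hne : a ≠ b) : R b a ↔ ¬ R a b := by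
  constructor
  · intro h1 h2
    exact (irrefl_of R a) (trans_of R h2 h1)
  · intro h1
    rcases trichotomous_of R a b with h' | h' | h'
    · exact absurd h' h1
    · exact absurd h' hne
    · exact h'

lemma step1 {ι A : Type*}
    (F : (ι → A → A → Prop) → A → A → Prop)
    (hF : IsSPF F) (hpar : ParetoSPF F) (hiia : IIA F)
    (C : Set ι) (a b c : A) (hab : a ≠ b) (hca : c ≠ a) (hcb : c ≠ b)
    (hdec : Decisive F C a b) : Decisive F C a c := by
  classical
  intro P hP hC
  set f : ι → A → ℕ := fun i t =>
    if i ∈ C then (if t = a then 0 else if t = b then 1 else if t = c then 2 else 3)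
    else (if t = b then 0 else if t = a then (if P i a c then 1 else 2)
          else if t = c then (if P i a c then 2 else 1) else 3) with hf
  set P' : ι → A → A → Prop := fun i => ballot (f i) with hP'def
  have hP' : IsProfile P' := fun i => ballot_sto _
  have fa : ∀ i ∈ C, f i a = 0 := by intro i hi; simp [hf, hi]
  have fb : ∀ i ∈ C, f i b = 1 := by intro i hi; simp [hf, hi, Ne.symm hab]
  have fc : ∀ i ∈ C, f i c = 2 := by intro i hi; simp [hf, hi, hca, hcb]
  have ga : ∀ i ∉ C, f i a = if P i a c then 1 else 2 := by
    intro i hi; simp [hf, hi, hab]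
  have gb : ∀ i ∉ C, f i b = 0 := by intro i hi; simp [hf, hi]
  have gc : ∀ i ∉ C, f i c = if P i a c then 2 else 1 := by
    intro i hi; simp [hf, hi, hca, hcb]
  -- F P' a b strict
  have h1 : F P' a b ∧ ¬ F P' b a := by
    refine hdec P' hP' fun i hi => ballot_of_lt ?_
    rw [fa i hi, fb i hi]; omega
  -- F P' b c strict (Pareto)
  have h2 : F P' b c ∧ ¬ F P' c b := by
    refine hpar P' hP' b c fun i => ballot_of_lt ?_
    by_cases hi : i ∈ C
    · rw [fb i hi, fc i hi]; omega
    · rw [gb i hi, gc i hi]; split <;> omega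
  have htr := (hF P' hP').1
  have hto := (hF P' hP').2
  have hac : F P' a c ∧ ¬ F P' c a := by
    have hnca : ¬ F P' c a := fun h => h2.2 (htr.trans c a b h h1.1)
    rcases hto.total a c with h | h
    · exact ⟨h, hnca⟩
    · exact absurd h hnca
  -- IIA transfer
  have hset : {i | P i a c} = {i | P' i a c} := by
    ext i
    simp only [Set.mem_setOf_eq]
    by_cases hi : i ∈ C
    · constructor
      · intro _; exact ballot_of_lt (by rw [fa i hi, fc i hi]; omega)
      · intro _; exact hC i hi
    · constructor
      · intro h
        exact ballot_of_lt (by rw [ga i hi, gc i hi, if_pos h, if_pos h]; omega)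
      · intro h
        by_contra hn
        exact not_ballot_of_lt (by rw [ga i hi, gc i hi, if_neg hn, if_neg hn]; omega) h
  have hset2 : {i | P i c a} = {i | P' i c a} := by
    ext i
    simp only [Set.mem_setOf_eq]
    rw [sto_rev_iff (hP i) (Ne.symm hca), sto_rev_iff (hP' i) (Ne.symm hca)]
    exact not_congr (Set.ext_iff.mp hset i)
  exact ⟨(hiia P P' hP hP' a c hset).mpr hac.1,
    fun h => hac.2 ((hiia P P' hP hP' c a hset2).mp h)⟩

lemma step2 {ι A : Type*}
    (F : (ι → A → A → Prop) → A → A → Prop)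
    (hF : IsSPF F) (hpar : ParetoSPF F) (hiia : IIA F)
    (C : Set ι) (a b c : A) (hab : a ≠ b) (hca : c ≠ a) (hcb : c ≠ b)
    (hdec : Decisive F C a b) : Decisive F C c b := by
  classical
  intro P hP hC
  set f : ι → A → ℕ := fun i t =>
    if i ∈ C then (if t = c then 0 else if t = a then 1 else if t = b then 2 else 3)
    else (if t = a then 3 else if t = c then (if P i c b then 0 else 1)
          else if t = b then (if P i c b then 1 else 0) else 2) with hf
  set P' : ι → A → A → Prop := fun i => ballot (f i) with hP'def
  have hP' : IsProfile P' := fun i => ballot_sto _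
  have fc : ∀ i ∈ C, f i c = 0 := by intro i hi; simp [hf, hi]
  have fa : ∀ i ∈ C, f i a = 1 := by intro i hi; simp [hf, hi, Ne.symm hca]
  have fb : ∀ i ∈ C, f i b = 2 := by intro i hi; simp [hf, hi, Ne.symm hcb, Ne.symm hab]
  have ga : ∀ i ∉ C, f i a = 3 := by intro i hi; simp [hf, hi]
  have gc : ∀ i ∉ C, f i c = if P i c b then 0 else 1 := by
    intro i hi; simp [hf, hi, hca]
  have gb : ∀ i ∉ C, f i b = if P i c b then 1 else 0 := by
    intro i hi; simp [hf, hi, Ne.symm hab, Ne.symm hcb]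
  have h1 : F P' a b ∧ ¬ F P' b a := by
    refine hdec P' hP' fun i hi => ballot_of_lt ?_
    rw [fa i hi, fb i hi]; omega
  have h2 : F P' c a ∧ ¬ F P' a c := by
    refine hpar P' hP' c a fun i => ballot_of_lt ?_
    by_cases hi : i ∈ C
    · rw [fc i hi, fa i hi]; omega
    · rw [gc i hi, ga i hi]; split <;> omega
  have htr := (hF P' hP').1
  have hto := (hF P' hP').2
  have hcb' : F P' c b ∧ ¬ F P' b c := by
    have hnbc : ¬ F P' b c := fun h => h1.2 (htr.trans b c a h h2.1)
    rcases hto.total c b with h | h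
    · exact ⟨h, hnbc⟩
    · exact absurd h hnbc
  have hset : {i | P i c b} = {i | P' i c b} := by
    ext i
    simp only [Set.mem_setOf_eq]
    by_cases hi : i ∈ C
    · constructor
      · intro _; exact ballot_of_lt (by rw [fc i hi, fb i hi]; omega)
      · intro _; exact hC i hi
    · constructor
      · intro h
        exact ballot_of_lt (by rw [gc i hi, gb i hi, if_pos h, if_pos h]; omega)
      · intro h
        by_contra hn
        exact not_ballot_of_lt (by rw [gc i hi, gb i hi, if_neg hn, if_neg hn]; omega) h
  have hset2 : {i | P i b c} = {i | P' i b c} := by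
    ext i
    simp only [Set.mem_setOf_eq]
    rw [sto_rev_iff (hP i) hcb, sto_rev_iff (hP' i) hcb]
    exact not_congr (Set.ext_iff.mp hset i)
  exact ⟨(hiia P P' hP hP' c b hset).mpr hcb'.1,
    fun h => hcb'.2 ((hiia P P' hP hP' b c hset2).mp h)⟩

lemma exists_third {A : Type*} [Fintype A] (h : 2 < Fintype.card A) (a b : A) :
    ∃ c : A, c ≠ a ∧ c ≠ b := by
  classical
  by_contra hc
  push_neg at hc
  have hsub : (Finset.univ : Finset A) ⊆ {a, b} := by
    intro t _
    by_cases ht : t = a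
    · simp [ht]
    · simp [hc t ht]
  have h1 := Finset.card_le_card hsub
  have h2 : ({a, b} : Finset A).card ≤ 2 :=
    (Finset.card_insert_le a {b}).trans (by simp)
  simp [Finset.card_univ] at h1
  omega

/-- Contagion lemma: a coalition decisive for one pair of distinct alternatives
is decisive for every pair of distinct alternatives. -/
theorem contagion {ι A : Type*} [Fintype ι] [Fintype A]
    (hA : 2 < Fintype.card A)
    (F : (ι → A → A → Prop) → A → A → Prop)
    (hF : IsSPF F) (hpar : ParetoSPF F) (hiia : IIA F)
    (C : Set ι) (x y : A) (hxy : x ≠ y) (hdec : Decisive F C x y) :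
    ∀ w z : A, w ≠ z → Decisive F C w z := by
  obtain ⟨c, hcx, hcy⟩ := exists_third hA x y
  have d_xc : Decisive F C x c := step1 F hF hpar hiia C x y c hxy hcx hcy hdec
  have d_yc : Decisive F C y c :=
    step2 F hF hpar hiia C x c y (Ne.symm hcx) (Ne.symm hxy) (Ne.symm hcy) d_xc
  have d_yx : Decisive F C y x :=
    step1 F hF hpar hiia C y c x (Ne.symm hcy) hxy (Ne.symm hcx) d_yc
  intro w z hwz
  by_cases hwx : w = x
  · subst hwx
    by_cases hzy : z = y
    · subst hzy; exact hdec
    · exact step1 F hF hpar hiia C w y z hxy (Ne.symm hwz) hzy hdec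
  · by_cases hwy : w = y
    · subst hwy
      by_cases hzx : z = x
      · subst hzx; exact d_yx
      · exact step1 F hF hpar hiia C w x z (Ne.symm hxy) (Ne.symm hwz) hzx d_yx
    · have d_wy : Decisive F C w y := step2 F hF hpar hiia C x y w hxy hwx hwy hdec
      by_cases hzy : z = y
      · subst hzy; exact d_wy
      · exact step1 F hF hpar hiia C w y z hwy (Ne.symm hwz) hzy d_wy
end

section
/- Ultrafilter lemma for Arrow: for an SPF F on at least three alternatives satisfying Pareto and IIA, the family W of decisive coalitions is an ultrafilter on N: (i) N ∈ W; (ii) for every coalition C, C ∈ W iff the complement of C is not in W; (iii) W is closed under intersection. -/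
/-- `C` is decisive (for every pair of distinct alternatives). -/
def DecisiveAll {ι A : Type*} (F : (ι → A → A → Prop) → A → A → Prop)
    (C : Set ι) : Prop :=
  ∀ x y : A, x ≠ y → Decisive F C x y

/-- numbering of alternatives for tie-breaking -/
private noncomputable def nm {A : Type*} [Fintype A] (a : A) : ℕ := (Fintype.equivFin A a : ℕ)

private lemma nm_inj {A : Type*} [Fintype A] : Function.Injective (nm (A := A)) := by
  intro a b h
  exact (Fintype.equivFin A).injective (Fin.val_injective h)

/-- strict linear order induced by scores, ties broken by `nm`; higher score preferred -/
private def ordS {A : Type*} [Fintype A] (s : A → ℕ) (a b : A) : Prop :=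
  s b < s a ∨ (s a = s b ∧ nm a < nm b)

private lemma ordS_sto {A : Type*} [Fintype A] (s : A → ℕ) :
    IsStrictTotalOrder A (ordS s) := by
  refine { trichotomous := ?_, irrefl := ?_, trans := ?_ }
  · intro a b hab hba
    rcases lt_trichotomy (s a) (s b) with h | h | h
    · exact (hba (Or.inl h)).elim
    · rcases lt_trichotomy (nm a) (nm b) with h' | h' | h'
      · exact (hab (Or.inr ⟨h, h'⟩)).elim
      · exact nm_inj h'
      · exact (hba (Or.inr ⟨h.symm, h'⟩)).elim
    · exact (hab (Or.inl h)).elim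
  · intro a
    rintro (h | ⟨-, h⟩) <;> exact lt_irrefl _ h
  · rintro a b c (h1 | ⟨h1, h1'⟩) (h2 | ⟨h2, h2'⟩)
    · exact Or.inl (h2.trans h1)
    · exact Or.inl (h2 ▸ h1)
    · exact Or.inl (h1 ▸ h2)
    · exact Or.inr ⟨h1.trans h2, h1'.trans h2'⟩

private lemma ordS_of {A : Type*} [Fintype A] {s : A → ℕ} {a b : A} (h : s b < s a) :
    ordS s a b := Or.inl h

private lemma not_ordS_of {A : Type*} [Fintype A] {s : A → ℕ} {a b : A} (h : s a < s b) :
    ¬ ordS s a b := by rintro (h' | ⟨h', -⟩) <;> omega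

private lemma sto_flip {A : Type*} {P : A → A → Prop} (h : IsStrictTotalOrder A P) {a b : A}
    (hab : a ≠ b) : P b a ↔ ¬ P a b := by
  haveI := h
  constructor
  · intro h1 h2
    exact irrefl_of P a (trans_of P h2 h1)
  · intro hn
    rcases trichotomous_of P a b with h1 | h1 | h1
    · exact absurd h1 hn
    · exact absurd h1 hab
    · exact h1

private lemma exists_third_s12 {A : Type*} [Fintype A] (hA : 2 < Fintype.card A) (x y : A) :
    ∃ z : A, z ≠ x ∧ z ≠ y := by
  classical
  by_contra h
  push_neg at h
  have hsub : (Finset.univ : Finset A) ⊆ {x, y} := by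
    intro a _
    by_cases ha : a = x
    · simp [ha]
    · simp [h a ha]
  have h1 := Finset.card_le_card hsub
  have h2 : ({x, y} : Finset A).card ≤ 2 :=
    (Finset.card_insert_le _ _).trans (by simp)
  rw [Finset.card_univ] at h1
  omega

private lemma pattern_eq {ι A : Type*} {P P' : ι → A → A → Prop}
    (hP : IsProfile P) (hP' : IsProfile P') {x y : A} (hxy : x ≠ y) (C : Set ι)
    (h1 : ∀ i ∈ C, P i x y) (h2 : ∀ i ∉ C, P i y x)
    (h1' : ∀ i ∈ C, P' i x y) (h2' : ∀ i ∉ C, P' i y x) :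
    {i | P i x y} = {i | P' i x y} := by
  ext i
  simp only [Set.mem_setOf_eq]
  by_cases hi : i ∈ C
  · simp [h1 i hi, h1' i hi]
  · have hn := (sto_flip (hP i) hxy).mp (h2 i hi)
    have hn' := (sto_flip (hP' i) hxy).mp (h2' i hi)
    simp [hn, hn']

/-- semi-decisiveness: weak social preference when `C` prefers `x` and everyone else `y`. -/
private def SemiDec {ι A : Type*} (F : (ι → A → A → Prop) → A → A → Prop)
    (C : Set ι) (x y : A) : Prop :=
  ∀ P, IsProfile P → (∀ i ∈ C, P i x y) → (∀ i ∉ C, P i y x) → F P x y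

private lemma dec_semidec {ι A : Type*} {F : (ι → A → A → Prop) → A → A → Prop}
    {C : Set ι} {x y : A} (h : Decisive F C x y) : SemiDec F C x y :=
  fun P hP h1 _ => (h P hP h1).1

private lemma iia_strict {ι A : Type*} {F : (ι → A → A → Prop) → A → A → Prop}
    (hiia : IIA F) {P P' : ι → A → A → Prop} (hP : IsProfile P) (hP' : IsProfile P')
    {x z : A} (hx : x ≠ z) (hpat : {i | P i x z} = {i | P' i x z}) :
    (F P x z ↔ F P' x z) ∧ (F P z x ↔ F P' z x) := by
  refine ⟨hiia P P' hP hP' x z hpat, hiia P P' hP hP' z x ?_⟩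
  ext i
  simp only [Set.mem_setOf_eq]
  rw [sto_flip (hP i) hx, sto_flip (hP' i) hx]
  exact not_congr (Set.ext_iff.mp hpat i)

private lemma L1 {ι A : Type*} [Fintype ι] [Fintype A]
    {F : (ι → A → A → Prop) → A → A → Prop}
    (hF : IsSPF F) (hpar : ParetoSPF F) (hiia : IIA F)
    {C : Set ι} {x y : A} (hsd : SemiDec F C x y) (hxy : x ≠ y)
    {z : A} (hzx : z ≠ x) (hzy : z ≠ y) : Decisive F C x z := by
  classical
  intro Q hQ hCQ
  set S : ι → A → ℕ := fun i a =>
    if i ∈ C then (if a = x then 2 else if a = y then 1 else 0)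
    else (if a = y then 2 else if a = x then (if Q i x z then 1 else 0)
          else if a = z then (if Q i x z then 0 else 1) else 0) with hS
  set Q' : ι → A → A → Prop := fun i => ordS (S i) with hQ'def
  have hQ'prof : IsProfile Q' := fun i => ordS_sto _
  have hvx : ∀ i ∈ C, S i x = 2 := by intro i hi; simp [hS, hi]
  have hvy : ∀ i ∈ C, S i y = 1 := by intro i hi; simp [hS, hi, hxy.symm]
  have hvz : ∀ i ∈ C, S i z = 0 := by intro i hi; simp [hS, hi, hzx, hzy]
  have hwy : ∀ i ∉ C, S i y = 2 := by intro i hi; simp [hS, hi]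
  have hwx : ∀ i ∉ C, S i x = if Q i x z then 1 else 0 := by
    intro i hi; simp [hS, hi, hxy]
  have hwz : ∀ i ∉ C, S i z = if Q i x z then 0 else 1 := by
    intro i hi; simp [hS, hi, hzx, hzy]
  have hmem : ∀ i ∈ C, Q' i x y := fun i hi =>
    ordS_of (by rw [hvx i hi, hvy i hi]; norm_num)
  have hout : ∀ i ∉ C, Q' i y x := fun i hi =>
    ordS_of (by rw [hwx i hi, hwy i hi]; split <;> norm_num)
  have hyzall : ∀ i, Q' i y z := by
    intro i
    by_cases hi : i ∈ C
    · exact ordS_of (by rw [hvy i hi, hvz i hi]; norm_num)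
    · exact ordS_of (by rw [hwy i hi, hwz i hi]; split <;> norm_num)
  have hpat : {i | Q i x z} = {i | Q' i x z} := by
    ext i
    simp only [Set.mem_setOf_eq]
    by_cases hi : i ∈ C
    · have h' : Q' i x z := ordS_of (show S i z < S i x by rw [hvx i hi, hvz i hi]; norm_num)
      simp [hCQ i hi, h']
    · by_cases hq : Q i x z
      · have h' : Q' i x z := ordS_of (show S i z < S i x by
          rw [hwx i hi, hwz i hi, if_pos hq, if_pos hq]; norm_num)
        simp [hq, h']
      · have h' : ¬ Q' i x z := not_ordS_of (show S i x < S i z by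
          rw [hwx i hi, hwz i hi, if_neg hq, if_neg hq]; norm_num)
        simp [hq, h']
  have hyzs := hpar Q' hQ'prof y z hyzall
  have hxyw : F Q' x y := hsd Q' hQ'prof hmem hout
  have htr := (hF Q' hQ'prof).1
  have hxz : F Q' x z := htr.trans _ _ _ hxyw hyzs.1
  have hnzx : ¬ F Q' z x := fun h => hyzs.2 (htr.trans _ _ _ h hxyw)
  have hii := iia_strict hiia hQ hQ'prof hzx.symm hpat
  exact ⟨hii.1.mpr hxz, fun h => hnzx (hii.2.mp h)⟩

private lemma L2 {ι A : Type*} [Fintype ι] [Fintype A]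
    {F : (ι → A → A → Prop) → A → A → Prop}
    (hF : IsSPF F) (hpar : ParetoSPF F) (hiia : IIA F)
    {C : Set ι} {x y : A} (hsd : SemiDec F C x y) (hxy : x ≠ y)
    {z : A} (hzx : z ≠ x) (hzy : z ≠ y) : Decisive F C z y := by
  classical
  intro Q hQ hCQ
  set S : ι → A → ℕ := fun i a =>
    if i ∈ C then (if a = z then 2 else if a = x then 1 else 0)
    else (if a = z then (if Q i z y then 2 else 1)
          else if a = y then (if Q i z y then 1 else 2) else 0) with hS
  set Q' : ι → A → A → Prop := fun i => ordS (S i) with hQ'def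
  have hQ'prof : IsProfile Q' := fun i => ordS_sto _
  have hvz : ∀ i ∈ C, S i z = 2 := by intro i hi; simp [hS, hi]
  have hvx : ∀ i ∈ C, S i x = 1 := by intro i hi; simp [hS, hi, hzx.symm]
  have hvy : ∀ i ∈ C, S i y = 0 := by intro i hi; simp [hS, hi, hzy.symm, hxy.symm]
  have hwz : ∀ i ∉ C, S i z = if Q i z y then 2 else 1 := by
    intro i hi; simp [hS, hi]
  have hwy : ∀ i ∉ C, S i y = if Q i z y then 1 else 2 := by
    intro i hi; simp [hS, hi, hzy.symm]
  have hwx : ∀ i ∉ C, S i x = 0 := by intro i hi; simp [hS, hi, hzx.symm, hxy]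
  have hmem : ∀ i ∈ C, Q' i x y := fun i hi =>
    ordS_of (by rw [hvx i hi, hvy i hi]; norm_num)
  have hout : ∀ i ∉ C, Q' i y x := fun i hi =>
    ordS_of (by rw [hwx i hi, hwy i hi]; split <;> norm_num)
  have hzxall : ∀ i, Q' i z x := by
    intro i
    by_cases hi : i ∈ C
    · exact ordS_of (by rw [hvz i hi, hvx i hi]; norm_num)
    · exact ordS_of (by rw [hwz i hi, hwx i hi]; split <;> norm_num)
  have hpat : {i | Q i z y} = {i | Q' i z y} := by
    ext i
    simp only [Set.mem_setOf_eq]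
    by_cases hi : i ∈ C
    · have h' : Q' i z y := ordS_of (show S i y < S i z by rw [hvz i hi, hvy i hi]; norm_num)
      simp [hCQ i hi, h']
    · by_cases hq : Q i z y
      · have h' : Q' i z y := ordS_of (show S i y < S i z by
          rw [hwz i hi, hwy i hi, if_pos hq, if_pos hq]; norm_num)
        simp [hq, h']
      · have h' : ¬ Q' i z y := not_ordS_of (show S i z < S i y by
          rw [hwz i hi, hwy i hi, if_neg hq, if_neg hq]; norm_num)
        simp [hq, h']
  have hzxs := hpar Q' hQ'prof z x hzxall
  have hxyw : F Q' x y := hsd Q' hQ'prof hmem hout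
  have htr := (hF Q' hQ'prof).1
  have hzy' : F Q' z y := htr.trans _ _ _ hzxs.1 hxyw
  have hnyz : ¬ F Q' y z := fun h => hzxs.2 (htr.trans _ _ _ hxyw h)
  have hii := iia_strict hiia hQ hQ'prof hzy hpat
  exact ⟨hii.1.mpr hzy', fun h => hnyz (hii.2.mp h)⟩

private lemma semidec_all {ι A : Type*} [Fintype ι] [Fintype A]
    (hA : 2 < Fintype.card A)
    {F : (ι → A → A → Prop) → A → A → Prop}
    (hF : IsSPF F) (hpar : ParetoSPF F) (hiia : IIA F)
    {C : Set ι} {x y : A} (hsd : SemiDec F C x y) (hxy : x ≠ y) :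
    DecisiveAll F C := by
  have hxb : ∀ b, b ≠ x → Decisive F C x b := by
    intro b hb
    by_cases hby : b = y
    · subst hby
      obtain ⟨z, hzx, hzy⟩ := exists_third_s12 hA x b
      have hxz : Decisive F C x z := L1 hF hpar hiia hsd hxy hzx hzy
      exact L1 hF hpar hiia (dec_semidec hxz) (Ne.symm hzx) hb hzy.symm
    · exact L1 hF hpar hiia hsd hxy hb hby
  have hax : ∀ a, a ≠ x → Decisive F C a x := by
    intro a ha
    obtain ⟨c, hca, hcx⟩ := exists_third_s12 hA a x
    have h1 : Decisive F C x c := hxb c hcx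
    have h2 : Decisive F C a c :=
      L2 hF hpar hiia (dec_semidec h1) (Ne.symm hcx) ha hca.symm
    exact L1 hF hpar hiia (dec_semidec h2) (fun h => hca h.symm) ha.symm hcx.symm
  intro a b hab
  by_cases hax' : a = x
  · subst hax'
    exact hxb b (Ne.symm hab)
  · by_cases hbx : b = x
    · subst hbx
      exact hax a hax'
    · exact L1 hF hpar hiia (dec_semidec (hax a hax')) hax' (Ne.symm hab) hbx

private lemma dichotomy {ι A : Type*} [Fintype ι] [Fintype A]
    (hA : 2 < Fintype.card A)
    {F : (ι → A → A → Prop) → A → A → Prop}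
    (hF : IsSPF F) (hpar : ParetoSPF F) (hiia : IIA F) (C : Set ι) :
    DecisiveAll F C ∨ DecisiveAll F Cᶜ := by
  classical
  obtain ⟨x, y, -, hxy, -, -⟩ := Fintype.two_lt_card_iff.mp hA
  set P0 : ι → A → A → Prop := fun i => ordS (fun a =>
    if i ∈ C then (if a = x then 1 else 0) else (if a = y then 1 else 0)) with hP0def
  have hP0 : IsProfile P0 := fun i => ordS_sto _
  have hC1 : ∀ i ∈ C, P0 i x y := by
    intro i hi
    exact ordS_of (by simp [hi, hxy.symm])
  have hC2 : ∀ i ∉ C, P0 i y x := by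
    intro i hi
    exact ordS_of (by simp [hi, hxy])
  rcases (hF P0 hP0).2.total x y with h | h
  · left
    refine semidec_all hA hF hpar hiia (C := C) (x := x) (y := y) ?_ hxy
    intro P hP h1 h2
    have hpat := pattern_eq hP hP0 hxy C h1 h2 hC1 hC2
    exact (hiia P P0 hP hP0 x y hpat).mpr h
  · right
    refine semidec_all hA hF hpar hiia (C := Cᶜ) (x := y) (y := x) ?_ hxy.symm
    intro P hP h1 h2
    have hC1' : ∀ i ∈ Cᶜ, P0 i y x := fun i hi => hC2 i hi
    have hC2' : ∀ i ∉ Cᶜ, P0 i x y := fun i hi => hC1 i (not_not.mp hi)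
    have hpat := pattern_eq hP hP0 hxy.symm Cᶜ h1 h2 hC1' hC2'
    exact (hiia P P0 hP hP0 y x hpat).mpr h

private lemma not_both {ι A : Type*} [Fintype ι] [Fintype A]
    (hA : 2 < Fintype.card A)
    {F : (ι → A → A → Prop) → A → A → Prop}
    {C : Set ι} (hC : DecisiveAll F C) (hCc : DecisiveAll F Cᶜ) : False := by
  classical
  obtain ⟨x, y, -, hxy, -, -⟩ := Fintype.two_lt_card_iff.mp hA
  set P0 : ι → A → A → Prop := fun i => ordS (fun a =>
    if i ∈ C then (if a = x then 1 else 0) else (if a = y then 1 else 0)) with hP0def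
  have hP0 : IsProfile P0 := fun i => ordS_sto _
  have hC1 : ∀ i ∈ C, P0 i x y := by
    intro i hi
    exact ordS_of (by simp [hi, hxy.symm])
  have hC2 : ∀ i ∈ Cᶜ, P0 i y x := by
    intro i hi
    exact ordS_of (by simp [Set.notMem_of_mem_compl hi, hxy])
  exact (hC x y hxy P0 hP0 hC1).2 (hCc y x hxy.symm P0 hP0 hC2).1

private lemma decisive_inter {ι A : Type*} [Fintype ι] [Fintype A]
    (hA : 2 < Fintype.card A)
    {F : (ι → A → A → Prop) → A → A → Prop}
    (hF : IsSPF F) (hpar : ParetoSPF F) (hiia : IIA F)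
    {C D : Set ι} (hC : DecisiveAll F C) (hD : DecisiveAll F D) :
    DecisiveAll F (C ∩ D) := by
  classical
  obtain ⟨x, y, z, hxy, hxz, hyz⟩ := Fintype.two_lt_card_iff.mp hA
  set S : ι → A → ℕ := fun i a =>
    if i ∈ C ∩ D then (if a = x then 2 else if a = y then 1 else 0)
    else if i ∈ C then (if a = z then 2 else if a = x then 1 else 0)
    else (if a = y then 2 else if a = z then 1 else 0) with hS
  set P1 : ι → A → A → Prop := fun i => ordS (S i) with hP1def
  have hP1 : IsProfile P1 := fun i => ordS_sto _
  have hCx : ∀ i ∈ C, P1 i x y := by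
    intro i hi
    by_cases hid : i ∈ D
    · exact ordS_of (by simp [hS, hi, hid, hxy, hxz, hyz, hxy.symm, hxz.symm, hyz.symm])
    · exact ordS_of (by simp [hS, hi, hid, hxy, hxz, hyz, hxy.symm, hxz.symm, hyz.symm])
  have hDy : ∀ i ∈ D, P1 i y z := by
    intro i hi
    by_cases hic : i ∈ C
    · exact ordS_of (by simp [hS, hi, hic, hxy, hxz, hyz, hxy.symm, hxz.symm, hyz.symm])
    · exact ordS_of (by simp [hS, hi, hic, hxy, hxz, hyz, hxy.symm, hxz.symm, hyz.symm])
  have hmem : ∀ i ∈ C ∩ D, P1 i x z := by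
    intro i hi
    exact ordS_of (by simp [hS, hi.1, hi.2, hxy, hxz, hyz, hxy.symm, hxz.symm, hyz.symm])
  have hout : ∀ i ∉ C ∩ D, P1 i z x := by
    intro i hi
    by_cases hic : i ∈ C
    · have hnd : i ∉ D := fun h => hi ⟨hic, h⟩
      exact ordS_of (by simp [hS, hic, hnd, hxy, hxz, hyz, hxy.symm, hxz.symm, hyz.symm])
    · exact ordS_of (by simp [hS, hic, hxy, hxz, hyz, hxy.symm, hxz.symm, hyz.symm])
  have hxys := hC x y hxy P1 hP1 hCx
  have hyzs := hD y z hyz P1 hP1 hDy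
  have htr := (hF P1 hP1).1
  have hxzF : F P1 x z := htr.trans _ _ _ hxys.1 hyzs.1
  refine semidec_all hA hF hpar hiia (C := C ∩ D) (x := x) (y := z) ?_ hxz
  intro P hP h1 h2
  have hpat := pattern_eq hP hP1 hxz (C ∩ D) h1 h2 hmem hout
  exact (hiia P P1 hP hP1 x z hpat).mpr hxzF

/-- Ultrafilter lemma for Arrow: the family of decisive coalitions of a Pareto
and IIA SPF is an ultrafilter on the set of voters. -/
theorem decisive_ultrafilter {ι A : Type*} [Fintype ι] [Fintype A]
    (hA : 2 < Fintype.card A)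
    (F : (ι → A → A → Prop) → A → A → Prop)
    (hF : IsSPF F) (hpar : ParetoSPF F) (hiia : IIA F) :
    DecisiveAll F (Set.univ : Set ι) ∧
    (∀ C : Set ι, DecisiveAll F C ↔ ¬ DecisiveAll F Cᶜ) ∧
    (∀ C D : Set ι, DecisiveAll F C → DecisiveAll F D → DecisiveAll F (C ∩ D)) := by
  refine ⟨?_, ?_, ?_⟩
  · intro a b hab P hP h1
    exact hpar P hP a b (fun i => h1 i (Set.mem_univ i))
  · intro C
    constructor
    · intro hC hCc
      exact not_both hA hC hCc
    · intro h
      rcases dichotomy hA hF hpar hiia C with h' | h'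
      · exact h'
      · exact absurd h' h
  · intro C D hC hD
    exact decisive_inter hA hF hpar hiia hC hD
end

section
/- Every resolute strategy-proof SCF is independent: if two profiles agree on the set of voters preferring x to y, and x wins in the first while y does not, then y does not win in the second. -/
/-- A resolute SCF `f : profiles → A` is strategy-proof if no voter can, by
unilaterally changing her ballot, obtain a winner she strictly prefers
(according to her truthful ballot). -/
def StrategyProof {ι A : Type*} (f : (ι → A → A → Prop) → A) : Prop :=
  ¬ ∃ (i : ι) (P Pm : ι → A → A → Prop), IsProfile P ∧ IsProfile Pm ∧
      (∀ j, j ≠ i → P j = Pm j) ∧ P i (f Pm) (f P)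

/-- Ballot with `x` first, `y` second, and the rest ordered by `r`. -/
def topBallot {A : Type*} (x y : A) (r : A → A → Prop) : A → A → Prop :=
  fun a b => (a = x ∧ b ≠ x) ∨ (a = y ∧ b ≠ x ∧ b ≠ y) ∨
    (a ≠ x ∧ a ≠ y ∧ b ≠ x ∧ b ≠ y ∧ r a b)

lemma topBallot_sto {A : Type*} (x y : A) (hxy : x ≠ y) (r : A → A → Prop)
    (hr : IsStrictTotalOrder A r) : IsStrictTotalOrder A (topBallot x y r) := by
  have hirr : ∀ a, ¬ r a a := fun a => hr.irrefl a
  have htr : ∀ a b c, r a b → r b c → r a c := fun a b c => hr.trans a b c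
  have htri : ∀ a b, r a b ∨ a = b ∨ r b a := by haveI := hr; exact fun a b => trichotomous_of (r := r) a b
  refine { trichotomous := ?_, irrefl := ?_, trans := ?_ }
  · -- trichotomous
    intro a b hn1 hn2; refine (?_ : topBallot x y r a b ∨ a = b ∨ topBallot x y r b a).elim (fun h => absurd h hn1) (Or.elim · id (fun h => absurd h hn2))
    by_cases hax : a = x
    · by_cases hbx : b = x
      · exact Or.inr (Or.inl (hax.trans hbx.symm))
      · exact Or.inl (Or.inl ⟨hax, hbx⟩)
    · by_cases hbx : b = x
      · exact Or.inr (Or.inr (Or.inl ⟨hbx, hax⟩))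
      · by_cases hay : a = y
        · by_cases hby : b = y
          · exact Or.inr (Or.inl (hay.trans hby.symm))
          · exact Or.inl (Or.inr (Or.inl ⟨hay, hbx, hby⟩))
        · by_cases hby : b = y
          · exact Or.inr (Or.inr (Or.inr (Or.inl ⟨hby, hax, hay⟩)))
          · rcases htri a b with h | h | h
            · exact Or.inl (Or.inr (Or.inr ⟨hax, hay, hbx, hby, h⟩))
            · exact Or.inr (Or.inl h)
            · exact Or.inr (Or.inr (Or.inr (Or.inr ⟨hbx, hby, hax, hay, h⟩)))
  · -- irrefl
    intro a h
    rcases h with ⟨h1, h2⟩ | ⟨h1, h2, h3⟩ | ⟨h1, h2, h3, h4, h5⟩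
    · exact h2 h1
    · exact h3 h1
    · exact hirr a h5
  · -- trans
    intro a b c hab hbc
    rcases hab with ⟨ha, hb⟩ | ⟨ha, hb1, hb2⟩ | ⟨ha1, ha2, hb1, hb2, hab⟩
    · refine Or.inl ⟨ha, ?_⟩
      rcases hbc with ⟨h1, h2⟩ | ⟨h1, h2, h3⟩ | ⟨h1, h2, h3, h4, h5⟩
      · exact absurd h1 hb
      · exact h2
      · exact h3
    · rcases hbc with ⟨h1, h2⟩ | ⟨h1, h2, h3⟩ | ⟨h1, h2, h3, h4, h5⟩
      · exact absurd h1 hb1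
      · exact absurd h1 hb2
      · exact Or.inr (Or.inl ⟨ha, h3, h4⟩)
    · rcases hbc with ⟨h1, h2⟩ | ⟨h1, h2, h3⟩ | ⟨h1, h2, h3, h4, h5⟩
      · exact absurd h1 hb1
      · exact absurd h1 hb2
      · exact Or.inr (Or.inr ⟨ha1, ha2, h3, h4, htr a b c hab h5⟩)

/-- Key consequence of strategy-proofness for one-voter deviations. -/
lemma keystep {ι A : Type*} (f : (ι → A → A → Prop) → A) (hsp : StrategyProof f)
    {Q Q' : ι → A → A → Prop} (hQ : IsProfile Q) (hQ' : IsProfile Q') (i : ι)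
    (h : ∀ j, j ≠ i → Q j = Q' j) (hne : f Q' ≠ f Q) :
    Q i (f Q) (f Q') ∧ Q' i (f Q') (f Q) := by
  have h1 : ¬ Q i (f Q') (f Q) := fun hc => hsp ⟨i, Q, Q', hQ, hQ', h, hc⟩
  have h2 : ¬ Q' i (f Q) (f Q') := fun hc =>
    hsp ⟨i, Q', Q, hQ', hQ, fun j hj => (h j hj).symm, hc⟩
  constructor
  · rcases (haveI := hQ i; trichotomous_of (r := Q i) (f Q) (f Q')) with h' | h' | h'
    · exact h'
    · exact absurd h'.symm hne
    · exact absurd h' h1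
  · rcases (haveI := hQ' i; trichotomous_of (r := Q' i) (f Q') (f Q)) with h' | h' | h'
    · exact h'
    · exact absurd h' hne
    · exact absurd h' h2

/-- Every resolute strategy-proof SCF is independent: if two profiles agree on
the set of voters preferring `x` to `y`, and `x` wins in the first while `y`
does not, then `y` does not win in the second. -/
theorem strategyProof_implies_independent {ι A : Type*} [Fintype ι] [Fintype A]
    (f : (ι → A → A → Prop) → A) (hsp : StrategyProof f) :
    ∀ (P P' : ι → A → A → Prop) (x y : A), IsProfile P → IsProfile P' →
      {i | P i x y} = {i | P' i x y} → f P = x → y ≠ x → f P' ≠ y := by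
  classical
  intro P P' x y hP hP' hset hfx hyx hfy
  have hxy : x ≠ y := Ne.symm hyx
  set r : A → A → Prop := WellOrderingRel with hrdef
  have hr : IsStrictTotalOrder A r := by
    have : IsWellOrder A WellOrderingRel := inferInstance
    exact ⟨⟩
  have hsame : ∀ i, P i x y ↔ P' i x y := fun i => Set.ext_iff.mp hset i
  -- common "x,y on top" profile
  set T : ι → A → A → Prop :=
    fun i => if P i x y then topBallot x y r else topBallot y x r with hTdef
  have hTsto : ∀ i, IsStrictTotalOrder A (T i) := by
    intro i
    by_cases h : P i x y
    · simpa [hTdef, h] using topBallot_sto x y hxy r hr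
    · simpa [hTdef, h] using topBallot_sto y x hxy.symm r hr
  -- asymmetry helper
  have hasymm : ∀ (Q : A → A → Prop), IsStrictTotalOrder A Q →
      ∀ a b, Q a b → ¬ Q b a := by
    intro Q hQ a b hab hba
    exact hQ.irrefl a (hQ.trans a b a hab hba)
  -- invariant from P : winner stays x
  have key : ∀ S : Finset ι, f (fun i => if i ∈ S then T i else P i) = x := by
    intro S
    induction S using Finset.induction_on with
    | empty => simpa using hfx
    | @insert a S haS ih =>
      set Q : ι → A → A → Prop := fun i => if i ∈ S then T i else P i with hQdef
      set Q' : ι → A → A → Prop := fun i => if i ∈ insert a S then T i else P i with hQ'def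
      have hQprof : IsProfile Q := by
        intro i; simp only [hQdef]; split <;> [exact hTsto i; exact hP i]
      have hQ'prof : IsProfile Q' := by
        intro i; simp only [hQ'def]; split <;> [exact hTsto i; exact hP i]
      have hdiff : ∀ j, j ≠ a → Q j = Q' j := by
        intro j hj
        simp only [hQdef, hQ'def, Finset.mem_insert]
        by_cases h : j ∈ S <;> simp [h, hj]
      by_contra hne'
      have hne : f Q' ≠ f Q := by rw [ih]; exact hne'
      obtain ⟨h1, h2⟩ := keystep f hsp hQprof hQ'prof a hdiff hne
      rw [ih] at h1 h2
      have hQa : Q a = P a := by simp [hQdef, haS]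
      have hQ'a : Q' a = T a := by simp [hQ'def]
      rw [hQa] at h1
      rw [hQ'a] at h2
      by_cases hpa : P a x y
      · -- T a = topBallot x y r, nothing is above x
        rw [hTdef] at h2
        simp only [hpa, if_pos] at h2
        rcases h2 with ⟨_, hc⟩ | ⟨_, hc, _⟩ | ⟨_, _, hc, _, _⟩ <;> exact hc rfl
      · -- T a = topBallot y x r, only y is above x, contradiction with h1
        rw [hTdef] at h2
        simp only [hpa, if_neg, not_false_iff] at h2
        have hfQ'y : f Q' = y := by
          rcases h2 with ⟨hc, _⟩ | ⟨hc, _, h3⟩ | ⟨_, _, _, hc, _⟩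
          · exact hc
          · exact absurd rfl h3
          · exact absurd rfl hc
        rw [hfQ'y] at h1
        exact hpa h1
  -- invariant from P' : winner stays y
  have key' : ∀ S : Finset ι, f (fun i => if i ∈ S then T i else P' i) = y := by
    intro S
    induction S using Finset.induction_on with
    | empty => simpa using hfy
    | @insert a S haS ih =>
      set Q : ι → A → A → Prop := fun i => if i ∈ S then T i else P' i with hQdef
      set Q' : ι → A → A → Prop := fun i => if i ∈ insert a S then T i else P' i with hQ'def
      have hQprof : IsProfile Q := by
        intro i; simp only [hQdef]; split <;> [exact hTsto i; exact hP' i]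
      have hQ'prof : IsProfile Q' := by
        intro i; simp only [hQ'def]; split <;> [exact hTsto i; exact hP' i]
      have hdiff : ∀ j, j ≠ a → Q j = Q' j := by
        intro j hj
        simp only [hQdef, hQ'def, Finset.mem_insert]
        by_cases h : j ∈ S <;> simp [h, hj]
      by_contra hne'
      have hne : f Q' ≠ f Q := by rw [ih]; exact hne'
      obtain ⟨h1, h2⟩ := keystep f hsp hQprof hQ'prof a hdiff hne
      rw [ih] at h1 h2
      have hQa : Q a = P' a := by simp [hQdef, haS]
      have hQ'a : Q' a = T a := by simp [hQ'def]
      rw [hQa] at h1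
      rw [hQ'a] at h2
      by_cases hpa : P a x y
      · -- T a = topBallot x y r; only x is above y
        rw [hTdef] at h2
        simp only [hpa, if_pos] at h2
        have hfQ'x : f Q' = x := by
          rcases h2 with ⟨hc, _⟩ | ⟨hc, _, h3⟩ | ⟨_, _, _, hc, _⟩
          · exact hc
          · exact absurd rfl h3
          · exact absurd rfl hc
        rw [hfQ'x] at h1
        have : P' a x y := (hsame a).mp hpa
        exact hasymm (P' a) (hP' a) x y this h1
      · -- T a = topBallot y x r; nothing is above y
        rw [hTdef] at h2
        simp only [hpa, if_neg, not_false_iff] at h2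
        rcases h2 with ⟨_, hc⟩ | ⟨_, hc, _⟩ | ⟨_, _, hc, _, _⟩ <;> exact hc rfl
  have hx := key Finset.univ
  have hy := key' Finset.univ
  simp only [Finset.mem_univ, if_true] at hx hy
  rw [hx] at hy
  exact hxy hy
end

section
/- Gibbard–Satterthwaite theorem: for a resolute SCF on at least three alternatives, f is non-imposed and strategy-proof if and only if f is a dictatorship. -/
set_option linter.unusedSectionVars false
set_option linter.unusedVariables false
namespace GS0

variable {ι A : Type*}

lemma sto_tri {r : A → A → Prop} (h : IsStrictTotalOrder A r) (a b : A) :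
    r a b ∨ a = b ∨ r b a := by
  haveI := h; exact trichotomous a b

lemma sto_irrefl {r : A → A → Prop} (h : IsStrictTotalOrder A r) (a : A) : ¬ r a a := by
  haveI := h; exact irrefl a

lemma sto_trans {r : A → A → Prop} (h : IsStrictTotalOrder A r) {a b c : A} :
    r a b → r b c → r a c := by
  haveI := h; exact fun h1 h2 => _root_.trans h1 h2

lemma sto_asymm {r : A → A → Prop} (h : IsStrictTotalOrder A r) {a b : A} :
    r a b → ¬ r b a :=
  fun h1 h2 => (sto_irrefl h a) (sto_trans h h1 h2)

def moveTop (x : A) (r : A → A → Prop) (a b : A) : Prop := b ≠ x ∧ (a = x ∨ r a b)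

lemma moveTop_sto {r : A → A → Prop} (h : IsStrictTotalOrder A r) (x : A) :
    IsStrictTotalOrder A (moveTop x r) := by
  haveI : IsIrrefl A (moveTop x r) := ⟨by
    rintro a ⟨h1, h2 | h2⟩
    · exact h1 h2
    · exact sto_irrefl h a h2⟩
  haveI : IsTrans A (moveTop x r) := ⟨by
    rintro a b c ⟨hb, ha⟩ ⟨hc, hb'⟩
    refine ⟨hc, ?_⟩
    rcases ha with rfl | ha
    · exact Or.inl rfl
    rcases hb' with rfl | hb'
    · exact absurd rfl hb
    · exact Or.inr (sto_trans h ha hb')⟩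
  haveI : IsTrichotomous A (moveTop x r) := ⟨by
    intro a b
    suffices H : moveTop x r a b ∨ a = b ∨ moveTop x r b a by
      intro h1 h2; rcases H with H | H | H; exacts [absurd H h1, H, absurd H h2]
    rcases eq_or_ne a b with rfl | hab
    · exact Or.inr (Or.inl rfl)
    rcases eq_or_ne a x with rfl | hax
    · exact Or.inl ⟨Ne.symm hab, Or.inl rfl⟩
    rcases eq_or_ne b x with rfl | hbx
    · exact Or.inr (Or.inr ⟨hax, Or.inl rfl⟩)
    rcases sto_tri h a b with h1 | h1 | h1
    · exact Or.inl ⟨hbx, Or.inr h1⟩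
    · exact Or.inr (Or.inl h1)
    · exact Or.inr (Or.inr ⟨hax, Or.inr h1⟩)⟩
  haveI : IsStrictOrder A (moveTop x r) := ⟨⟩
  exact ⟨⟩

noncomputable def bse (A : Type*) [Fintype A] : A → A → Prop :=
  fun a b => Fintype.equivFin A a < Fintype.equivFin A b

lemma bse_sto [Fintype A] : IsStrictTotalOrder A (bse A) := by
  haveI : IsIrrefl A (bse A) := ⟨fun a => lt_irrefl _⟩
  haveI : IsTrans A (bse A) := ⟨fun a b c h1 h2 => lt_trans h1 h2⟩
  haveI : IsTrichotomous A (bse A) := ⟨by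
    intro a b
    suffices H : bse A a b ∨ a = b ∨ bse A b a by
      intro h1 h2; rcases H with H | H | H; exacts [absurd H h1, H, absurd H h2]
    rcases lt_trichotomy (Fintype.equivFin A a) (Fintype.equivFin A b) with h | h | h
    · exact Or.inl h
    · exact Or.inr (Or.inl ((Fintype.equivFin A).injective h))
    · exact Or.inr (Or.inr h)⟩
  haveI : IsStrictOrder A (bse A) := ⟨⟩
  exact ⟨⟩


section SCF
variable [Fintype ι] [Fintype A] (f : (ι → A → A → Prop) → A)

/-- One-voter monotonicity from strategy-proofness. -/
lemma mono_one [DecidableEq ι] (hSP : StrategyProof f) {P : ι → A → A → Prop}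
    (hP : IsProfile P) (i : ι) {r' : A → A → Prop} (hr' : IsStrictTotalOrder A r')
    (hw : ∀ z, P i (f P) z → r' (f P) z) :
    f (Function.update P i r') = f P := by
  set P' := Function.update P i r' with hP'def
  have hP' : IsProfile P' := by
    intro j
    rcases eq_or_ne j i with rfl | hj
    · simpa [P'] using hr'
    · simpa [P', Function.update_of_ne hj] using hP j
  have not1 : ¬ P i (f P') (f P) := fun hbad =>
    hSP ⟨i, P, P', hP, hP', fun j hj => (Function.update_of_ne hj r' P).symm, hbad⟩
  have not2 : ¬ P' i (f P) (f P') := fun hbad =>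
    hSP ⟨i, P', P, hP', hP, fun j hj => (Function.update_of_ne hj r' P), hbad⟩
  rcases sto_tri (hP i) (f P') (f P) with h1 | h1 | h1
  · exact absurd h1 not1
  · exact h1
  · exfalso
    apply not2
    have : r' (f P) (f P') := hw _ h1
    simpa [P'] using this

/-- Full monotonicity. -/
lemma mono [DecidableEq ι] (hSP : StrategyProof f) {P P' : ι → A → A → Prop}
    (hP : IsProfile P) (hP' : IsProfile P') {w : A} (hfP : f P = w)
    (hc : ∀ j z, P j w z → P' j w z) : f P' = w := by
  have key : ∀ S : Finset ι, f (fun j => if j ∈ S then P' j else P j) = w := by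
    intro S
    induction S using Finset.induction_on with
    | empty => simpa using hfP
    | @insert a S ha ih =>
        have hQ : IsProfile (fun j => if j ∈ S then P' j else P j) := by
          intro j; by_cases hj : j ∈ S <;> simp [hj] <;> [exact hP' j; exact hP j]
        have heq : (fun j => if j ∈ insert a S then P' j else P j)
            = Function.update (fun j => if j ∈ S then P' j else P j) a (P' a) := by
          funext j
          rcases eq_or_ne j a with rfl | hj
          · simp [ha]
          · simp [Function.update_of_ne hj, Finset.mem_insert, hj]
        rw [heq]
        rw [mono_one f hSP hQ a (hP' a) ?_, ih]
        intro z hz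
        rw [ih] at hz ⊢
        simp only [ha, if_neg ha] at hz
        exact hc a z hz
  have := key Finset.univ
  simpa using this

lemma unanimity [DecidableEq ι] (hSP : StrategyProof f)
    (hOnto : ∀ x : A, ∃ P, IsProfile P ∧ f P = x)
    {P : ι → A → A → Prop} (hP : IsProfile P) {x : A}
    (htop : ∀ j z, z ≠ x → P j x z) : f P = x := by
  obtain ⟨Q, hQ, hfQ⟩ := hOnto x
  exact mono f hSP hQ hP hfQ
    (fun j z hz => htop j z (fun e => sto_irrefl (hQ j) x (e ▸ hz)))

noncomputable def b2 [Fintype A] (x y : A) : A → A → Prop := moveTop x (moveTop y (bse A))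

noncomputable def b3 [Fintype A] (x y z : A) : A → A → Prop :=
  moveTop x (moveTop y (moveTop z (bse A)))

lemma b2_sto [Fintype A] (x y : A) : IsStrictTotalOrder A (b2 x y) :=
  moveTop_sto (moveTop_sto bse_sto y) x

lemma b3_sto [Fintype A] (x y z : A) : IsStrictTotalOrder A (b3 x y z) :=
  moveTop_sto (moveTop_sto (moveTop_sto bse_sto z) y) x

/-- `x` is top and `y` is second. -/
def TopTwo (r : A → A → Prop) (x y : A) : Prop :=
  (∀ z, z ≠ x → r x z) ∧ (∀ z, z ≠ x → z ≠ y → r y z)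

lemma topTwo_b2 [Fintype A] (x y : A) : TopTwo (b2 x y) x y :=
  ⟨fun z hz => ⟨hz, Or.inl rfl⟩, fun z hzx hzy => ⟨hzx, Or.inr ⟨hzy, Or.inl rfl⟩⟩⟩

lemma pareto [DecidableEq ι] (hSP : StrategyProof f)
    (hOnto : ∀ x : A, ∃ P, IsProfile P ∧ f P = x)
    {P : ι → A → A → Prop} (hP : IsProfile P) {x y : A} (hxy : x ≠ y)
    (hall : ∀ j, P j x y) : f P ≠ y := by
  intro hy
  have hP'' : IsProfile (fun j => moveTop x (P j)) := fun j => moveTop_sto (hP j) x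
  have h1 : f (fun j => moveTop x (P j)) = y := by
    refine mono f hSP hP hP'' hy ?_
    intro j z hz
    refine ⟨fun e => sto_asymm (hP j) (hall j) (e ▸ hz), Or.inr hz⟩
  have h2 : f (fun j => moveTop x (P j)) = x := by
    refine unanimity f hSP hOnto hP'' ?_
    intro j z hz
    exact ⟨hz, Or.inl rfl⟩
  exact hxy (h2.symm.trans h1)

/-- Decisiveness of coalition `W` for `x` against `y`. -/
def Dctr (W : Finset ι) (x y : A) : Prop :=
  ∀ Q : ι → A → A → Prop, IsProfile Q → (∀ j ∈ W, TopTwo (Q j) x y) →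
    (∀ j ∉ W, TopTwo (Q j) y x) → f Q = x

lemma class_not_other [DecidableEq ι] (hSP : StrategyProof f)
    (hOnto : ∀ x : A, ∃ P, IsProfile P ∧ f P = x)
    {W : Finset ι} {x y : A} {Q : ι → A → A → Prop} (hQ : IsProfile Q)
    (h1 : ∀ j ∈ W, TopTwo (Q j) x y) (h2 : ∀ j ∉ W, TopTwo (Q j) y x)
    {c : A} (hcx : c ≠ x) (hcy : c ≠ y) : f Q ≠ c := by
  refine pareto f hSP hOnto hQ (Ne.symm hcx) ?_
  intro j
  by_cases hj : j ∈ W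
  · exact (h1 j hj).1 c hcx
  · exact (h2 j hj).2 c hcy hcx

lemma D_or [DecidableEq ι] (hSP : StrategyProof f)
    (hOnto : ∀ x : A, ∃ P, IsProfile P ∧ f P = x)
    (W : Finset ι) {x y : A} (hxy : x ≠ y) :
    Dctr f W x y ∨ Dctr f Wᶜ y x := by
  by_cases h : Dctr f W x y
  · exact Or.inl h
  right
  unfold Dctr at h; push_neg at h
  obtain ⟨Q0, hQ0, h1, h2, hne⟩ := h
  have hQ0y : f Q0 = y := by
    by_contra hy
    exact class_not_other f hSP hOnto hQ0 h1 h2 hne hy rfl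
  intro Q hQ hq1 hq2
  refine mono f hSP hQ0 hQ hQ0y ?_
  intro j z hz
  have hzy : z ≠ y := fun e => sto_irrefl (hQ0 j) y (e ▸ hz)
  by_cases hj : j ∈ W
  · have ht := h1 j hj
    have hzx : z ≠ x := by
      intro e; subst e
      exact sto_asymm (hQ0 j) (ht.1 y (Ne.symm hxy)) hz
    have ht' : TopTwo (Q j) x y := hq2 j (by simpa using hj)
    exact ht'.2 z hzx hzy
  · have ht' : TopTwo (Q j) y x := hq1 j (by simpa using hj)
    exact ht'.1 z hzy

lemma D_not_both [DecidableEq ι] {W : Finset ι} {x y : A} (hxy : x ≠ y) :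
    ¬ (Dctr f W x y ∧ Dctr f Wᶜ y x) := by
  rintro ⟨h1, h2⟩
  classical
  set Q := fun j => if j ∈ W then b2 x y else b2 y x with hQdef
  have hQ : IsProfile Q := by
    intro j; by_cases hj : j ∈ W <;> simp only [Q, if_pos, if_neg, hj, if_true, if_false]
    · exact b2_sto x y
    · exact b2_sto y x
  have e1 : f Q = x := by
    refine h1 Q hQ (fun j hj => ?_) (fun j hj => ?_)
    · simpa only [Q, if_pos hj] using topTwo_b2 x y
    · simpa only [Q, if_neg hj] using topTwo_b2 y x
  have e2 : f Q = y := by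
    refine h2 Q hQ (fun j hj => ?_) (fun j hj => ?_)
    · have hj' : j ∉ W := by simpa using hj
      simpa only [Q, if_neg hj'] using topTwo_b2 y x
    · have hj' : j ∈ W := by simpa using hj
      simpa only [Q, if_pos hj'] using topTwo_b2 x y
  exact hxy (e1.symm.trans e2)

/-- Pairwise decisiveness from full decisiveness. -/
lemma PD [DecidableEq ι] (hSP : StrategyProof f)
    (hOnto : ∀ x : A, ∃ P, IsProfile P ∧ f P = x)
    {W : Finset ι} (hU : ∀ x y : A, x ≠ y → Dctr f W x y)
    {P : ι → A → A → Prop} (hP : IsProfile P) {x y : A} (hxy : x ≠ y)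
    (hpref : ∀ j ∈ W, P j x y) : f P ≠ y := by
  intro hfP
  set Q := fun j => if j ∈ W then b2 x y else b2 y x with hQdef
  have hQ : IsProfile Q := by
    intro j; by_cases hj : j ∈ W <;> simp only [Q, if_pos, if_neg, hj, if_true, if_false]
    · exact b2_sto x y
    · exact b2_sto y x
  have hm : f Q = y := by
    refine mono f hSP hP hQ hfP ?_
    intro j z hz
    have hzy : z ≠ y := fun e => sto_irrefl (hP j) y (e ▸ hz)
    by_cases hj : j ∈ W
    · have hzx : z ≠ x := fun e => sto_asymm (hP j) (hpref j hj) (e ▸ hz)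
      simp only [Q, if_pos hj]
      exact ⟨hzx, Or.inr ⟨hzy, Or.inl rfl⟩⟩
    · simp only [Q, if_neg hj]
      exact ⟨hzy, Or.inl rfl⟩
  have hx : f Q = x := by
    refine hU x y hxy Q hQ (fun j hj => ?_) (fun j hj => ?_)
    · simpa only [Q, if_pos hj] using topTwo_b2 x y
    · simpa only [Q, if_neg hj] using topTwo_b2 y x
  exact hxy (hx.symm.trans hm)

lemma first_slot [DecidableEq ι] (hSP : StrategyProof f)
    (hOnto : ∀ x : A, ∃ P, IsProfile P ∧ f P = x)
    {W : Finset ι} {x y z : A} (hxy : x ≠ y) (hzx : z ≠ x) (hzy : z ≠ y)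
    (hD : Dctr f W x y) : Dctr f W z y := by
  rcases D_or f hSP hOnto W hzy with h | h
  · exact h
  exfalso
  set T := fun j => if j ∈ W then b3 z x y else b3 y z x with hTdef
  have hTprof : IsProfile T := by
    intro j; by_cases hj : j ∈ W <;> simp only [T, if_pos, if_neg, hj, if_true, if_false]
    · exact b3_sto z x y
    · exact b3_sto y z x
  have hTx : f T ≠ x := by
    refine pareto f hSP hOnto hTprof hzx ?_
    intro j
    by_cases hj : j ∈ W
    · simp only [T, if_pos hj]
      exact ⟨Ne.symm hzx, Or.inl rfl⟩
    · simp only [T, if_neg hj]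
      exact ⟨hxy, Or.inr ⟨Ne.symm hzx, Or.inl rfl⟩⟩
  have hTother : ∀ c, c ≠ x → c ≠ y → c ≠ z → f T ≠ c := by
    intro c hcx hcy hcz
    refine pareto f hSP hOnto hTprof (Ne.symm hcx) ?_
    intro j
    by_cases hj : j ∈ W
    · simp only [T, if_pos hj]
      exact ⟨hcz, Or.inr ⟨hcx, Or.inl rfl⟩⟩
    · simp only [T, if_neg hj]
      exact ⟨hcy, Or.inr ⟨hcz, Or.inr ⟨hcx, Or.inl rfl⟩⟩⟩
  have hTyz : f T = y ∨ f T = z := by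
    by_contra hcon
    push_neg at hcon
    exact hTother (f T) hTx hcon.1 hcon.2 rfl
  rcases hTyz with hy' | hz'
  · -- f T = y, contradict hD
    set T3 := fun j => if j ∈ W then b2 x y else b2 y x with hT3def
    have hT3prof : IsProfile T3 := by
      intro j; by_cases hj : j ∈ W <;> simp only [T3, if_pos, if_neg, hj, if_true, if_false]
      · exact b2_sto x y
      · exact b2_sto y x
    have e1 : f T3 = y := by
      refine mono f hSP hTprof hT3prof hy' ?_
      intro j c hc
      have hcy : c ≠ y := fun e => sto_irrefl (hTprof j) y (e ▸ hc)
      by_cases hj : j ∈ W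
      · simp only [T, if_pos hj] at hc
        simp only [T3, if_pos hj]
        obtain ⟨hcz, h'⟩ := hc
        rcases h' with e | ⟨hcx, _⟩
        · exact absurd e.symm hzy
        · exact ⟨hcx, Or.inr ⟨hcy, Or.inl rfl⟩⟩
      · simp only [T, if_neg hj] at hc
        simp only [T3, if_neg hj]
        exact ⟨hc.1, Or.inl rfl⟩
    have e2 : f T3 = x := by
      refine hD T3 hT3prof (fun j hj => ?_) (fun j hj => ?_)
      · simpa only [T3, if_pos hj] using topTwo_b2 x y
      · simpa only [T3, if_neg hj] using topTwo_b2 y x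
    exact hxy (e2.symm.trans e1)
  · -- f T = z, contradict h : Dctr f Wᶜ y z
    set T2 := fun j => if j ∈ W then b2 z y else b2 y z with hT2def
    have hT2prof : IsProfile T2 := by
      intro j; by_cases hj : j ∈ W <;> simp only [T2, if_pos, if_neg, hj, if_true, if_false]
      · exact b2_sto z y
      · exact b2_sto y z
    have e1 : f T2 = z := by
      refine mono f hSP hTprof hT2prof hz' ?_
      intro j c hc
      by_cases hj : j ∈ W
      · simp only [T, if_pos hj] at hc
        simp only [T2, if_pos hj]
        exact ⟨hc.1, Or.inl rfl⟩
      · simp only [T, if_neg hj] at hc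
        simp only [T2, if_neg hj]
        obtain ⟨hcy, h'⟩ := hc
        rcases h' with e | ⟨hcz, _⟩
        · exact absurd e hzy
        · exact ⟨hcy, Or.inr ⟨hcz, Or.inl rfl⟩⟩
    have e2 : f T2 = y := by
      refine h T2 hT2prof (fun j hj => ?_) (fun j hj => ?_)
      · have hj' : j ∉ W := by simpa using hj
        simpa only [T2, if_neg hj'] using topTwo_b2 y z
      · have hj' : j ∈ W := by simpa using hj
        simpa only [T2, if_pos hj'] using topTwo_b2 z y
    exact hzy (e1.symm.trans e2)

lemma second_slot [DecidableEq ι] (hSP : StrategyProof f)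
    (hOnto : ∀ x : A, ∃ P, IsProfile P ∧ f P = x)
    {W : Finset ι} {x y z : A} (hxy : x ≠ y) (hzx : z ≠ x) (hzy : z ≠ y)
    (hD : Dctr f W x y) : Dctr f W x z := by
  rcases D_or f hSP hOnto W (Ne.symm hzx) with h | h
  · exact h
  exfalso
  have h2 : Dctr f Wᶜ y x := first_slot f hSP hOnto hzx (Ne.symm hzy) (Ne.symm hxy) h
  exact D_not_both f hxy ⟨hD, h2⟩

lemma exists_third (hA : 2 < Fintype.card A) (x y : A) : ∃ z : A, z ≠ x ∧ z ≠ y := by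
  classical
  by_contra hcon
  push_neg at hcon
  have hsub : (Finset.univ : Finset A) ⊆ insert x {y} := by
    intro z _
    rcases eq_or_ne z x with rfl | hzx
    · exact Finset.mem_insert_self _ _
    · rw [hcon z hzx]
      exact Finset.mem_insert_of_mem (Finset.mem_singleton_self _)
  have hle : Fintype.card A ≤ 2 := by
    calc Fintype.card A = (Finset.univ : Finset A).card := (Finset.card_univ).symm
    _ ≤ (insert x ({y} : Finset A)).card := Finset.card_le_card hsub
    _ ≤ 2 := (Finset.card_insert_le _ _).trans (by simp)
  omega

lemma transfer [DecidableEq ι] (hA : 2 < Fintype.card A) (hSP : StrategyProof f)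
    (hOnto : ∀ x : A, ∃ P, IsProfile P ∧ f P = x)
    {W : Finset ι} {x y : A} (hxy : x ≠ y) (hD : Dctr f W x y) :
    ∀ x' y' : A, x' ≠ y' → Dctr f W x' y' := by
  intro x' y' hne
  rcases eq_or_ne x' x with rfl | hx'
  · rcases eq_or_ne y' y with rfl | hy'
    · exact hD
    · exact second_slot f hSP hOnto hxy (Ne.symm hne) hy' hD
  rcases eq_or_ne x' y with rfl | hx'y
  · -- x' = y : go via a third alternative
    obtain ⟨z, hz1, hz2⟩ := exists_third hA x x'
    have s1 : Dctr f W x z := second_slot f hSP hOnto hxy hz1 hz2 hD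
    have s2 : Dctr f W x' z := first_slot f hSP hOnto (Ne.symm hz1) hx' (Ne.symm hz2) s1
    rcases eq_or_ne y' z with rfl | hy'z
    · exact s2
    · exact second_slot f hSP hOnto (Ne.symm hz2) (Ne.symm hne) hy'z s2
  · -- x' ∉ {x, y}
    have s1 : Dctr f W x' y := first_slot f hSP hOnto hxy hx' hx'y hD
    rcases eq_or_ne y' y with rfl | hy'
    · exact s1
    · exact second_slot f hSP hOnto hx'y (Ne.symm hne) hy' s1

lemma inter_mem [DecidableEq ι] (hA : 2 < Fintype.card A) (hSP : StrategyProof f)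
    (hOnto : ∀ x : A, ∃ P, IsProfile P ∧ f P = x) {W1 W2 : Finset ι}
    (h1 : ∀ x y : A, x ≠ y → Dctr f W1 x y) (h2 : ∀ x y : A, x ≠ y → Dctr f W2 x y) :
    ∀ x y : A, x ≠ y → Dctr f (W1 ∩ W2) x y := by
  have hnt : Nontrivial A := Fintype.one_lt_card_iff_nontrivial.mp (by omega)
  obtain ⟨x, y, hxy⟩ := exists_pair_ne A
  obtain ⟨z, hzx, hzy⟩ := exists_third hA x y
  suffices hs : Dctr f (W1 ∩ W2) x y by
    exact transfer f hA hSP hOnto hxy hs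
  rcases D_or f hSP hOnto (W1 ∩ W2) hxy with h | h
  · exact h
  exfalso
  have hcomp := transfer f hA hSP hOnto (Ne.symm hxy) h
  set T := fun j => if j ∈ W1 ∩ W2 then b3 x y z else if j ∈ W1 then b3 z x y else b3 y z x
    with hTdef
  have hTprof : IsProfile T := by
    intro j; by_cases hm : j ∈ W1 ∩ W2
    · simp only [T, if_pos hm]; exact b3_sto x y z
    · simp only [T, if_neg hm]
      by_cases hj1 : j ∈ W1
      · simp only [if_pos hj1]; exact b3_sto z x y
      · simp only [if_neg hj1]; exact b3_sto y z x
  have hy : f T ≠ y := by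
    refine PD f hSP hOnto h1 hTprof hxy ?_
    intro j hj
    by_cases hm : j ∈ W1 ∩ W2
    · simp only [T, if_pos hm]
      exact ⟨Ne.symm hxy, Or.inl rfl⟩
    · simp only [T, if_neg hm, if_pos hj]
      exact ⟨Ne.symm hzy, Or.inr ⟨Ne.symm hxy, Or.inl rfl⟩⟩
  have hz : f T ≠ z := by
    refine PD f hSP hOnto h2 hTprof (Ne.symm hzy) ?_
    intro j hj
    by_cases hm : j ∈ W1 ∩ W2
    · simp only [T, if_pos hm]
      exact ⟨hzx, Or.inr ⟨hzy, Or.inl rfl⟩⟩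
    · have hj1 : j ∉ W1 := fun hh => hm (Finset.mem_inter.mpr ⟨hh, hj⟩)
      simp only [T, if_neg hm, if_neg hj1]
      exact ⟨hzy, Or.inl rfl⟩
  have hx : f T ≠ x := by
    refine PD f hSP hOnto hcomp hTprof hzx ?_
    intro j hj
    have hm : j ∉ W1 ∩ W2 := Finset.mem_compl.mp hj
    by_cases hj1 : j ∈ W1
    · simp only [T, if_neg hm, if_pos hj1]
      exact ⟨Ne.symm hzx, Or.inl rfl⟩
    · simp only [T, if_neg hm, if_neg hj1]
      exact ⟨hxy, Or.inr ⟨Ne.symm hzx, Or.inl rfl⟩⟩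
  have hother : ∀ c, c ≠ x → c ≠ y → c ≠ z → f T ≠ c := by
    intro c hcx hcy hcz
    refine pareto f hSP hOnto hTprof (Ne.symm hcx) ?_
    intro j
    by_cases hm : j ∈ W1 ∩ W2
    · simp only [T, if_pos hm]
      exact ⟨hcx, Or.inl rfl⟩
    · by_cases hj1 : j ∈ W1
      · simp only [T, if_neg hm, if_pos hj1]
        exact ⟨hcz, Or.inr ⟨hcx, Or.inl rfl⟩⟩
      · simp only [T, if_neg hm, if_neg hj1]
        exact ⟨hcy, Or.inr ⟨hcz, Or.inr ⟨hcx, Or.inl rfl⟩⟩⟩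
  exact hother (f T) hx hy hz rfl

end SCF
end GS0

/-- Gibbard–Satterthwaite: a resolute SCF on more than two alternatives is
non-imposed and strategy-proof iff it is a dictatorship (the winner is always
the dictator's top-ranked alternative). -/
theorem gibbard_satterthwaite {ι A : Type*} [Fintype ι] [Fintype A]
    (hA : 2 < Fintype.card A)
    (f : (ι → A → A → Prop) → A) :
    ((∀ x : A, ∃ P, IsProfile P ∧ f P = x) ∧ StrategyProof f) ↔
      ∃ i : ι, ∀ P, IsProfile P → ∀ y : A, y ≠ f P → P i (f P) y := by
  classical
  constructor
  · rintro ⟨hOnto, hSP⟩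
    have hnt : Nontrivial A := Fintype.one_lt_card_iff_nontrivial.mp (by omega)
    obtain ⟨x0, y0, hxy0⟩ := exists_pair_ne A
    set 𝒮 : Finset (Finset ι) := Finset.univ.filter (fun W => GS0.Dctr f W x0 y0) with h𝒮
    have huniv : Finset.univ ∈ 𝒮 := by
      refine Finset.mem_filter.mpr ⟨Finset.mem_univ _, ?_⟩
      intro Q hQ h1 h2
      exact GS0.unanimity f hSP hOnto hQ (fun j z hz => (h1 j (Finset.mem_univ j)).1 z hz)
    obtain ⟨Wm, hWm, hmin⟩ := Finset.exists_min_image 𝒮 Finset.card ⟨_, huniv⟩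
    have hWmD : GS0.Dctr f Wm x0 y0 := (Finset.mem_filter.mp hWm).2
    have hWmall := GS0.transfer f hA hSP hOnto hxy0 hWmD
    have hne : Wm.Nonempty := by
      rcases Wm.eq_empty_or_nonempty with rfl | h
      · exfalso
        have h2 : GS0.Dctr f ((∅ : Finset ι)ᶜ) y0 x0 := by
          intro Q hQ h1 h2
          exact GS0.unanimity f hSP hOnto hQ
            (fun j z hz => (h1 j (by simp)).1 z hz)
        exact GS0.D_not_both f hxy0 ⟨hWmD, h2⟩
      · exact h
    obtain ⟨i, hi⟩ := hne
    have hiD : ∀ x y : A, x ≠ y → GS0.Dctr f {i} x y := by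
      by_cases hD : GS0.Dctr f {i} x0 y0
      · exact GS0.transfer f hA hSP hOnto hxy0 hD
      · exfalso
        rcases GS0.D_or f hSP hOnto {i} hxy0 with h | h
        · exact hD h
        have hcall := GS0.transfer f hA hSP hOnto (Ne.symm hxy0) h
        have hint := GS0.inter_mem f hA hSP hOnto hWmall hcall x0 y0 hxy0
        have hmem2 : Wm ∩ ({i}ᶜ) ∈ 𝒮 :=
          Finset.mem_filter.mpr ⟨Finset.mem_univ _, hint⟩
        have hlt : (Wm ∩ ({i}ᶜ)).card < Wm.card := by
          have he : Wm ∩ ({i}ᶜ) = Wm.erase i := by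
            ext j
            simp [Finset.mem_erase, and_comm]
          rw [he]
          exact Finset.card_erase_lt_of_mem hi
        exact absurd (hmin _ hmem2) (not_le.mpr hlt)
    refine ⟨i, ?_⟩
    intro P hP y hy
    rcases GS0.sto_tri (hP i) (f P) y with h | h | h
    · exact h
    · exact absurd h.symm hy
    · exfalso
      refine GS0.PD f hSP hOnto hiD hP hy (fun j hj => ?_) rfl
      have : j = i := Finset.mem_singleton.mp hj
      rw [this]
      exact h
  · rintro ⟨i, hdict⟩
    constructor
    · intro x
      refine ⟨fun _ => GS0.moveTop x (GS0.bse A),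
        fun j => GS0.moveTop_sto GS0.bse_sto x, ?_⟩
      by_contra hne
      have h1 := hdict _ (fun j => GS0.moveTop_sto GS0.bse_sto x) x (Ne.symm hne)
      exact h1.1 rfl
    · rintro ⟨j, P, Pm, hP, hPm, hdiff, hbad⟩
      rcases eq_or_ne j i with rfl | hji
      · rcases eq_or_ne (f Pm) (f P) with e | hne2
        · rw [e] at hbad
          exact GS0.sto_irrefl (hP j) _ hbad
        · exact GS0.sto_asymm (hP j) (hdict P hP (f Pm) hne2) hbad
      · have hPieq : P i = Pm i := hdiff i (Ne.symm hji)
        have heq : f P = f Pm := by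
          by_contra hne2
          have a1 : P i (f P) (f Pm) := hdict P hP (f Pm) (Ne.symm hne2)
          have a2 : Pm i (f Pm) (f P) := hdict Pm hPm (f P) hne2
          rw [← hPieq] at a2
          exact GS0.sto_asymm (hP i) a1 a2
        rw [heq] at hbad
        exact GS0.sto_irrefl (hP j) _ hbad
end

section
/- Black's theorem (transitivity part): if a profile of linear orders is single-peaked with respect to a common axis and the number of voters is odd, then the strict pairwise majority relation (x beats y iff strictly more voters prefer x to y) is transitive, i.e., a strict linear order on the alternatives. -/
/-- Black's theorem (transitivity part): if an odd number of voters have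
linear-order ballots that are all single-peaked with respect to a common axis
`gg`, then the strict pairwise majority relation is a strict linear order. -/
theorem blacks_theorem {ι A : Type*} [Fintype ι] [Fintype A]
    (hn : Odd (Fintype.card ι))
    (gg : A → A → Prop) (hgg : IsStrictTotalOrder A gg)
    (P : ι → A → A → Prop) (hP : ∀ i, IsStrictTotalOrder A (P i))
    (top : ι → A) (htop : ∀ i y, y ≠ top i → P i (top i) y)
    (hsp : ∀ i x y, (gg (top i) x ∧ gg x y) ∨ (gg y x ∧ gg x (top i)) → P i x y) :
    IsStrictTotalOrder A
      (fun x y => Nat.card {i : ι // P i y x} < Nat.card {i : ι // P i x y}) := by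
  classical
  -- basic facts about the individual orders
  have htrans : ∀ i {x y z}, P i x y → P i y z → P i x z :=
    fun i {x y z} h h' => (hP i).trans x y z h h'
  have hirr : ∀ i x, ¬ P i x x := fun i x => (hP i).irrefl x
  have hasym : ∀ i {x y}, P i x y → ¬ P i y x :=
    fun i {x y} h h' => hirr i x (htrans i h h')
  have htot : ∀ i {x y}, x ≠ y → ¬ P i x y → P i y x := by
    intro i x y hxy h
    rcases (haveI := hP i; trichotomous_of (P i) x y) with h' | h' | h'
    · exact absurd h' h
    · exact absurd h' hxy
    · exact h'
  -- gg basic facts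
  have ggirr : ∀ x, ¬ gg x x := fun x => hgg.irrefl x
  have ggne : ∀ {x y}, gg x y → x ≠ y := by
    rintro x y h rfl; exact ggirr x h
  have ggtot : ∀ {x y}, x ≠ y → ¬ gg x y → gg y x := by
    intro x y hxy h
    rcases (haveI := hgg; trichotomous_of gg x y) with h' | h' | h'
    · exact absurd h' h
    · exact absurd h' hxy
    · exact h'
  -- counting
  have hc : ∀ x y, Nat.card {i : ι // P i x y}
      = (Finset.univ.filter fun i => P i x y).card := by
    intro x y
    rw [Nat.card_eq_fintype_card, Fintype.card_subtype]
  have hsum : ∀ x y, x ≠ y →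
      Nat.card {i : ι // P i x y} + Nat.card {i : ι // P i y x}
        = Fintype.card ι := by
    intro x y hxy
    rw [hc, hc]
    have : (Finset.univ.filter fun i => P i y x)
        = (Finset.univ.filter fun i => ¬ P i x y) := by
      apply Finset.filter_congr
      intro i _
      constructor
      · exact fun h => hasym i h
      · exact fun h => htot i hxy h
    rw [this, Finset.card_filter_add_card_filter_not, Finset.card_univ]
  have hmono : ∀ a b c d : A, (∀ i, P i a b → P i c d) →
      Nat.card {i : ι // P i a b} ≤ Nat.card {i : ι // P i c d} := by
    intro a b c d h
    rw [hc, hc]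
    apply Finset.card_le_card
    intro i hi
    simp only [Finset.mem_filter, Finset.mem_univ, true_and] at *
    exact h i hi
  -- never-worst: the gg-middle of a triple is never a voter's worst
  have nw : ∀ i u m v, gg u m → gg m v → ¬ (P i u m ∧ P i v m) := by
    rintro i u m v h1 h2 ⟨hu, hv⟩
    rcases eq_or_ne (top i) m with ht | ht
    · subst ht
      exact hasym i hu (htop i u (ggne h1))
    rcases (haveI := hgg; trichotomous_of gg (top i) m) with hm | hm | hm
    · exact hasym i hv (hsp i m v (Or.inl ⟨hm, h2⟩))
    · exact ht hm
    · exact hasym i hu (hsp i m u (Or.inr ⟨h1, hm⟩))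
  -- the cyclic contradiction lemma (with the gg-middle in second position)
  have cyc : ∀ x y z : A, x ≠ y → x ≠ z →
      Nat.card {i : ι // P i y x} < Nat.card {i : ι // P i x y} →
      Nat.card {i : ι // P i x z} < Nat.card {i : ι // P i z x} →
      (∀ i, ¬ (P i x y ∧ P i z y)) → False := by
    intro x y z hxy hxz h1 h3 hnw
    have hsub : ∀ i, P i z x → P i y x := by
      intro i h
      by_cases hx : P i x y
      · exact absurd ⟨hx, htrans i h hx⟩ (hnw i)
      · exact htot i hxy hx
    have hle := hmono z x y x hsub
    have e1 := hsum x y hxy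
    have e2 := hsum z x (Ne.symm hxz)
    omega
  -- the majority relation
  refine { trichotomous := ?_, irrefl := ?_, trans := ?_ }
  · intro x y hn1 hn2
    rcases eq_or_ne x y with rfl | hxy
    · rfl
    have h := hsum x y hxy
    rcases hn with ⟨k, hk⟩
    rcases lt_trichotomy (Nat.card {i : ι // P i y x}) (Nat.card {i : ι // P i x y})
      with h' | h' | h'
    · exact absurd h' hn1
    · exact absurd h' (by omega)
    · exact absurd h' hn2
  · intro x h
    exact lt_irrefl _ h
  · intro x y z h1 h2
    show Nat.card {i : ι // P i z x} < Nat.card {i : ι // P i x z}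
    have hxy : x ≠ y := by rintro rfl; exact lt_irrefl _ h1
    have hyz : y ≠ z := by rintro rfl; exact lt_irrefl _ h2
    have hxz : x ≠ z := by
      rintro rfl
      exact lt_irrefl _ (h1.trans h2)
    by_contra hcon
    push_neg at hcon
    have h3 : Nat.card {i : ι // P i x z} < Nat.card {i : ι // P i z x} := by
      have h := hsum x z hxz
      rcases hn with ⟨k, hk⟩
      omega
    -- case analysis on the gg-middle of {x, y, z}
    by_cases gxy : gg x y
    · by_cases gyz : gg y z
      · -- x ≫ y ≫ z : middle y
        exact cyc x y z hxy hxz h1 h3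
          (fun i ⟨ha, hb⟩ => nw i x y z gxy gyz ⟨ha, hb⟩)
      · have gzy : gg z y := ggtot hyz gyz
        by_cases gxz : gg x z
        · -- x ≫ z ≫ y : middle z
          exact cyc y z x hyz (Ne.symm hxy) h2 h1
            (fun i ⟨ha, hb⟩ => nw i x z y gxz gzy ⟨hb, ha⟩)
        · have gzx : gg z x := ggtot hxz gxz
          -- z ≫ x ≫ y : middle x
          exact cyc z x y (Ne.symm hxz) (Ne.symm hyz) h3 h2
            (fun i ⟨ha, hb⟩ => nw i z x y gzx gxy ⟨ha, hb⟩)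
    · have gyx : gg y x := ggtot hxy gxy
      by_cases gyz : gg y z
      · by_cases gxz : gg x z
        · -- y ≫ x ≫ z : middle x
          exact cyc z x y (Ne.symm hxz) (Ne.symm hyz) h3 h2
            (fun i ⟨ha, hb⟩ => nw i y x z gyx gxz ⟨hb, ha⟩)
        · have gzx : gg z x := ggtot hxz gxz
          -- y ≫ z ≫ x : middle z
          exact cyc y z x hyz (Ne.symm hxy) h2 h1
            (fun i ⟨ha, hb⟩ => nw i y z x gyz gzx ⟨ha, hb⟩)
      · have gzy : gg z y := ggtot hyz gyz
        -- z ≫ y ≫ x : middle y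
        exact cyc x y z hxy hxz h1 h3
          (fun i ⟨ha, hb⟩ => nw i z y x gzy gyx ⟨hb, ha⟩)
end
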